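/- arXiv:2305.05967 — 5 statements merged into one kernel-verified Lean document; each statement's English description precedes it below -/
import Mathlib

section
/- Let ν_1, ..., ν_n be continuous, non-increasing functions on (0, ∞) with ν_i(x) → ∞ as x → 0+ and ν_i(x) → 0 as x → ∞, and let X_1, ..., X_n be independent random variables with distribution functions F_i(x) = exp{-ν_i(x)} for x > 0, F_i(0) = 0. Let x_n(y) = sup{x : Σ_{i=1}^n ν_i(x) ≥ y} be the generalized inverse of the function x ↦ Σ_{i=1}^n ν_i(x). Then for each i, p_{in} = P(X_i = max{X_1, ..., X_n}) = ∫_0^∞ ν_i(x_n(y)) e^{-y} dy. -/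
/-!
By independence, `P(X i = max_j X j) = ∫_{x > 0} exp (-G x) dF_i(x)` with `G = ∑_{j ≠ i} ν j`.
Writing `exp (-G x) = ∫_{y > G x} exp (-y) dy` and swapping the integrals turns this into
`∫_0^∞ exp (-y) (1 - F_i (a y)) dy`, where `a` is the generalized inverse of `G`. On the other
side `ν i (x_n y) = y - G (x_n y)` and `∫_0^∞ y exp (-y) dy = 1`, so it remains to see
`∫_0^∞ exp (-y) F_i (a y) dy = ∫_0^∞ exp (-y) G (x_n y) dy`: both are the integral of
`exp (-y)` over `{(u, y) | x_n y < a u}`, sliced along `y` and along `u` respectively.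
-/

open MeasureTheory ProbabilityTheory Finset Filter Topology Set
open scoped ENNReal

theorem lintegral_exp_neg_Ioi (c : ℝ) :
    ∫⁻ y in Ioi c, ENNReal.ofReal (Real.exp (-y)) = ENNReal.ofReal (Real.exp (-c)) := by
  rw [← ofReal_integral_eq_lintegral_ofReal (integrableOn_exp_neg_Ioi c)
    (Eventually.of_forall fun y => (Real.exp_pos _).le), integral_exp_neg_Ioi]

theorem lintegral_exp_neg_Ioi_zero : ∫⁻ y in Ioi (0 : ℝ), ENNReal.ofReal (Real.exp (-y)) = 1 := by
  simp [lintegral_exp_neg_Ioi]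

theorem lintegral_mul_exp_neg_Ioi_zero :
    ∫⁻ y in Ioi (0 : ℝ), ENNReal.ofReal (y * Real.exp (-y)) = 1 := by
  have hGamma : ∫ y in Ioi (0 : ℝ), y * Real.exp (-y) = 1 := by
    rw [← Real.Gamma_two, Real.Gamma_eq_integral two_pos]
    refine setIntegral_congr_fun measurableSet_Ioi fun y _ => ?_
    norm_num [mul_comm]
  have hint : IntegrableOn (fun y : ℝ => y * Real.exp (-y)) (Ioi 0) := by
    exact Integrable.of_integral_ne_zero (hGamma ▸ one_ne_zero)
  rw [← ofReal_integral_eq_lintegral_ofReal hint, hGamma, ENNReal.ofReal_one]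
  exact (ae_restrict_iff' measurableSet_Ioi).2 (Eventually.of_forall fun y hy =>
    mul_nonneg (le_of_lt hy) (Real.exp_pos _).le)

theorem setLIntegral_exp_neg_eq_lintegral_measure_setOf_lt (μ : Measure ℝ) [SFinite μ]
    {G : ℝ → ℝ} (hG : ContinuousOn G (Ioi 0)) (hG₀ : ∀ x, 0 < x → 0 ≤ G x) :
    ∫⁻ x in Ioi 0, ENNReal.ofReal (Real.exp (-G x)) ∂μ
      = ∫⁻ y in Ioi 0, μ {x | 0 < x ∧ G x < y} * ENNReal.ofReal (Real.exp (-y)) := by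
  set U := {p : ℝ × ℝ | 0 < p.1 ∧ G p.1 < p.2}
  have hU : IsOpen U := by
    have hcont : ContinuousOn (fun p : ℝ × ℝ => p.2 - G p.1) (Set.Ioi 0 ×ˢ Set.univ) :=
      continuousOn_snd.sub (hG.comp continuousOn_fst fun p hp => hp.1)
    convert hcont.isOpen_inter_preimage (isOpen_Ioi.prod isOpen_univ) (isOpen_Ioi (a := 0)) using 1
    ext p
    simp [U, sub_pos]
  set F : ℝ → ℝ → ℝ≥0∞ := fun x y =>
    U.indicator (fun p => ENNReal.ofReal (Real.exp (-p.2))) (x, y)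
  have hF : AEMeasurable (Function.uncurry F)
      ((μ.restrict (Ioi 0)).prod (volume.restrict (Ioi 0))) :=
    ((Measurable.ennreal_ofReal (Real.measurable_exp.comp measurable_snd.neg)).indicator
      hU.measurableSet).aemeasurable
  calc ∫⁻ x in Ioi 0, ENNReal.ofReal (Real.exp (-G x)) ∂μ
      = ∫⁻ x in Ioi 0, (∫⁻ y in Ioi 0, F x y) ∂μ := by
        refine setLIntegral_congr_fun measurableSet_Ioi fun x hx => ?_
        have hsec : ∀ y,
            F x y = (Ioi (G x)).indicator (fun y => ENNReal.ofReal (Real.exp (-y))) y := fun y => by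
          simp [F, U, indicator_apply, mem_Ioi.1 hx]
        simp_rw [hsec]
        rw [lintegral_indicator measurableSet_Ioi, Measure.restrict_restrict measurableSet_Ioi,
          Ioi_inter_Ioi, sup_eq_left.2 (hG₀ x hx), lintegral_exp_neg_Ioi]
    _ = ∫⁻ y in Ioi 0, ∫⁻ x in Ioi 0, F x y ∂μ := lintegral_lintegral_swap hF
    _ = ∫⁻ y in Ioi 0, μ {x | 0 < x ∧ G x < y} * ENNReal.ofReal (Real.exp (-y)) := by
        refine setLIntegral_congr_fun measurableSet_Ioi fun y _ => ?_
        have hmeas : MeasurableSet {x | 0 < x ∧ G x < y} :=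
          hU.measurableSet.preimage (measurable_id.prodMk measurable_const)
        have hsec : ∀ x, F x y
            = {x | 0 < x ∧ G x < y}.indicator (fun _ => ENNReal.ofReal (Real.exp (-y))) x :=
          fun x => by simp [F, U, indicator_apply]
        simp_rw [hsec]
        rw [lintegral_indicator hmeas, setLIntegral_const, Measure.restrict_apply hmeas,
          inter_eq_left.2 fun x hx => hx.1, mul_comm]

/-- The paper's generalized inverse `sup {x | y ≤ f x}`, taken over `x > 0`; since `sSup ∅ = 0`
in `ℝ`, it is `0` when `f < y` on all of `(0, ∞)`. -/
noncomputable def upperInv (f : ℝ → ℝ) (y : ℝ) : ℝ := sSup {x | 0 < x ∧ y ≤ f x}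

theorem upperInv_nonneg (f : ℝ → ℝ) (y : ℝ) : 0 ≤ upperInv f y :=
  Real.sSup_nonneg fun _ hx => hx.1.le

/-- The shape of `ν = -log F` on `(0, ∞)` for the distribution function `F` of a positive random
variable, without the blow-up at `0⁺`, so that sums over possibly empty index sets qualify. -/
structure IsTailExponent (f : ℝ → ℝ) : Prop where
  continuousOn : ContinuousOn f (Ioi 0)
  antitoneOn : AntitoneOn f (Ioi 0)
  tendsto_atTop : Tendsto f atTop (𝓝 0)

namespace IsTailExponent

variable {f g : ℝ → ℝ} {x y c : ℝ}

theorem nonneg (hf : IsTailExponent f) (hx : 0 < x) : 0 ≤ f x :=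
  le_of_tendsto hf.tendsto_atTop <| eventually_atTop.2
    ⟨x, fun _ ht => hf.antitoneOn hx (hx.trans_le ht) ht⟩

theorem add (hf : IsTailExponent f) (hg : IsTailExponent g) : IsTailExponent (f + g) where
  continuousOn := hf.continuousOn.add hg.continuousOn
  antitoneOn := hf.antitoneOn.add hg.antitoneOn
  tendsto_atTop := add_zero (0 : ℝ) ▸ hf.tendsto_atTop.add hg.tendsto_atTop

theorem sum {ι : Type*} (s : Finset ι) {f : ι → ℝ → ℝ} (hf : ∀ i ∈ s, IsTailExponent (f i)) :
    IsTailExponent fun x => ∑ i ∈ s, f i x where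
  continuousOn := continuousOn_finsetSum s fun i hi => (hf i hi).continuousOn
  antitoneOn _ hx _ hy hxy := Finset.sum_le_sum fun i hi => (hf i hi).antitoneOn hx hy hxy
  tendsto_atTop := by simpa using tendsto_finsetSum s fun i hi => (hf i hi).tendsto_atTop

theorem bddAbove_setOf_le (hf : IsTailExponent f) (hy : 0 < y) :
    BddAbove {x | 0 < x ∧ y ≤ f x} := by
  obtain ⟨M, hM⟩ := (hf.tendsto_atTop.eventually_lt_const hy).exists_forall_of_atTop
  exact ⟨M, fun x hx => le_of_not_gt fun hMx => (hM x hMx.le).not_ge hx.2⟩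

theorem le_apply_upperInv (hf : IsTailExponent f) (hy : 0 < y) (hpos : 0 < upperInv f y) :
    y ≤ f (upperInv f y) := by
  have hne : {x | 0 < x ∧ y ≤ f x}.Nonempty := by
    by_contra h
    simp [upperInv, not_nonempty_iff_eq_empty.1 h] at hpos
  have hcont : ContinuousAt f (upperInv f y) := hf.continuousOn.continuousAt (Ioi_mem_nhds hpos)
  exact ContinuousWithinAt.closure_le (csSup_mem_closure hne (hf.bddAbove_setOf_le hy))
    continuousWithinAt_const hcont.continuousWithinAt fun _ hx => hx.2

theorem apply_upperInv (hf : IsTailExponent f) (hy : 0 < y) (hpos : 0 < upperInv f y) :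
    f (upperInv f y) = y := by
  refine le_antisymm (le_of_not_gt fun hlt => ?_) (hf.le_apply_upperInv hy hpos)
  have hcont : ContinuousAt f (upperInv f y) := hf.continuousOn.continuousAt (Ioi_mem_nhds hpos)
  obtain ⟨x, hx, hfx⟩ := (hcont.eventually (lt_mem_nhds hlt)).exists_gt
  exact hx.not_ge (le_csSup (hf.bddAbove_setOf_le hy) ⟨hpos.trans hx, hfx.le⟩)

theorem le_iff_le_upperInv (hf : IsTailExponent f) (hy : 0 < y) (hx : 0 < x) :
    y ≤ f x ↔ x ≤ upperInv f y :=
  ⟨fun h => le_csSup (hf.bddAbove_setOf_le hy) ⟨hx, h⟩, fun h =>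
    (hf.le_apply_upperInv hy (hx.trans_le h)).trans (hf.antitoneOn hx (hx.trans_le h) h)⟩

theorem upperInv_antitoneOn (hf : IsTailExponent f) : AntitoneOn (upperInv f) (Ioi 0) := by
  intro y₁ hy₁ y₂ hy₂ hle
  rcases (upperInv_nonneg f y₂).eq_or_lt with h | h
  · exact h ▸ upperInv_nonneg f y₁
  · exact (hf.le_iff_le_upperInv hy₁ h).1 (hle.trans (hf.le_apply_upperInv hy₂ h))

theorem upperInv_pos (hf : IsTailExponent f) (hf₀ : Tendsto f (𝓝[>] 0) atTop) (hy : 0 < y) :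
    0 < upperInv f y := by
  obtain ⟨x, hfx, hx⟩ := ((hf₀.eventually (eventually_ge_atTop y)).and self_mem_nhdsWithin).exists
  exact hx.trans_le ((hf.le_iff_le_upperInv hy hx).1 hfx)

theorem setOf_lt_eq_Ioi_upperInv (hf : IsTailExponent f) (hy : 0 < y) :
    {x | 0 < x ∧ f x < y} = Ioi (upperInv f y) := by
  ext x
  refine ⟨fun ⟨hx, hlt⟩ => lt_of_not_ge fun h => hlt.not_ge ((hf.le_iff_le_upperInv hy hx).2 h),
    fun h => ?_⟩
  have hx : 0 < x := (upperInv_nonneg f y).trans_lt h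
  exact ⟨hx, lt_of_not_ge fun h' => h.not_ge ((hf.le_iff_le_upperInv hy hx).1 h')⟩

theorem setLIntegral_indicator_upperInv_lt (hf : IsTailExponent f) (hc : 0 < c) :
    ∫⁻ y in Ioi 0, {y | upperInv f y < c}.indicator (fun y => ENNReal.ofReal (Real.exp (-y))) y
      = ENNReal.ofReal (Real.exp (-f c)) := by
  have hset : {y | upperInv f y < c} ∩ Ioi 0 = Ioi (f c) := by
    ext y
    refine ⟨fun ⟨hlt, hy⟩ => lt_of_not_ge fun hle =>
      hlt.not_ge ((hf.le_iff_le_upperInv hy hc).1 hle), fun hy => ?_⟩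
    have hy₀ : 0 < y := (hf.nonneg hc).trans_lt hy
    exact ⟨lt_of_not_ge fun hle => hy.not_ge ((hf.le_iff_le_upperInv hy₀ hc).2 hle), hy₀⟩
  rw [← lintegral_indicator measurableSet_Ioi, indicator_indicator, inter_comm, hset,
    lintegral_indicator measurableSet_Ioi, lintegral_exp_neg_Ioi]

theorem volume_setOf_lt_upperInv (hf : IsTailExponent f) (hc : 0 < c) :
    volume ({u | c < upperInv f u} ∩ Ioi 0) = ENNReal.ofReal (f c) := by
  have hsub : {u | c < upperInv f u} ∩ Ioi 0 ⊆ Ioc 0 (f c) := fun u ⟨hlt, hu⟩ =>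
    have hpos := hc.trans hlt
    ⟨hu, hf.apply_upperInv hu hpos ▸ hf.antitoneOn hc hpos hlt.le⟩
  have hsup : Ioo 0 (f c) ⊆ {u | c < upperInv f u} ∩ Ioi 0 := fun u ⟨hu, hlt⟩ =>
    have hle := (hf.le_iff_le_upperInv hu hc).1 hlt.le
    ⟨hle.lt_of_ne fun heq => hlt.ne (heq ▸ hf.apply_upperInv hu (heq ▸ hc)).symm, hu⟩
  refine le_antisymm ((measure_mono hsub).trans_eq ?_) ((measure_mono hsup).trans_eq' ?_) <;>
    simp

theorem tendsto_add_nhdsGT_zero {g : ℝ → ℝ} (hf : IsTailExponent f)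
    (hg₀ : Tendsto g (𝓝[>] 0) atTop) : Tendsto (g + f) (𝓝[>] 0) atTop :=
  tendsto_atTop_mono' _ (eventually_nhdsWithin_of_forall fun _ hx =>
    le_add_of_nonneg_right (hf.nonneg hx)) hg₀

theorem monotoneOn_comp_upperInv {g : ℝ → ℝ} (hf : IsTailExponent f)
    (hf₀ : Tendsto f (𝓝[>] 0) atTop) (hg : AntitoneOn g (Ioi 0)) :
    MonotoneOn (g ∘ upperInv f) (Ioi 0) := fun _ hy₁ _ hy₂ hle =>
  hg (hf.upperInv_pos hf₀ hy₂) (hf.upperInv_pos hf₀ hy₁) (hf.upperInv_antitoneOn hy₁ hy₂ hle)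

end IsTailExponent

section CDF

variable {μ : Measure ℝ} {h G : ℝ → ℝ}

theorem setLIntegral_measure_Iic_upperInv_mul_exp_neg (hh : IsTailExponent h)
    (hh₀ : Tendsto h (𝓝[>] 0) atTop) (hG : IsTailExponent G)
    (hμ : ∀ x, 0 < x → μ (Iic x) = ENNReal.ofReal (Real.exp (-h x))) (hμ₀ : μ (Iic 0) = 0) :
    ∫⁻ u in Ioi 0, μ (Iic (upperInv G u)) * ENNReal.ofReal (Real.exp (-u))
      = ∫⁻ y in Ioi 0,
          ENNReal.ofReal (G (upperInv (h + G) y)) * ENNReal.ofReal (Real.exp (-y)) := by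
  have hS := hh.add hG
  set a := upperInv G
  set xn := upperInv (h + G)
  have ha : AEMeasurable a (volume.restrict (Ioi 0)) :=
    aemeasurable_restrict_of_antitoneOn measurableSet_Ioi hG.upperInv_antitoneOn
  have hxn : AEMeasurable xn (volume.restrict (Ioi 0)) :=
    aemeasurable_restrict_of_antitoneOn measurableSet_Ioi hS.upperInv_antitoneOn
  set F : ℝ → ℝ → ℝ≥0∞ := fun u y =>
    {u | xn y < a u}.indicator (fun _ => ENNReal.ofReal (Real.exp (-y))) u
  have hF : AEMeasurable (Function.uncurry F)
      ((volume.restrict (Ioi 0)).prod (volume.restrict (Ioi 0))) := by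
    have hg : Measurable ({q : ℝ × ℝ × ℝ | q.2.1 < q.1}.indicator
        fun q => ENNReal.ofReal (Real.exp (-q.2.2))) :=
      (Real.measurable_exp.comp (measurable_snd.comp measurable_snd).neg).ennreal_ofReal.indicator
        (measurableSet_lt (measurable_fst.comp measurable_snd) measurable_fst)
    exact hg.comp_aemeasurable
      (ha.comp_fst.prodMk (hxn.comp_snd.prodMk measurable_snd.aemeasurable))
  calc ∫⁻ u in Ioi 0, μ (Iic (a u)) * ENNReal.ofReal (Real.exp (-u))
      = ∫⁻ u in Ioi 0, ∫⁻ y in Ioi 0, F u y := by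
        refine setLIntegral_congr_fun measurableSet_Ioi fun u hu => ?_
        rcases (upperInv_nonneg G u).eq_or_lt with ha₀ | ha₀
        · have hF₀ : ∀ y, F u y = 0 := fun y =>
            indicator_of_notMem (by simpa [a, ← ha₀] using upperInv_nonneg _ y) _
          simp [hF₀, ← ha₀, a, hμ₀]
        · rw [show (fun y => F u y)
              = {y | xn y < a u}.indicator fun y => ENNReal.ofReal (Real.exp (-y)) by
              ext y; simp [F, indicator_apply], hS.setLIntegral_indicator_upperInv_lt ha₀,
            hμ _ ha₀, Pi.add_apply, hG.apply_upperInv hu ha₀, neg_add, Real.exp_add,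
            ENNReal.ofReal_mul (Real.exp_pos _).le]
    _ = ∫⁻ y in Ioi 0, ∫⁻ u in Ioi 0, F u y := lintegral_lintegral_swap hF
    _ = ∫⁻ y in Ioi 0, ENNReal.ofReal (G (xn y)) * ENNReal.ofReal (Real.exp (-y)) := by
        refine setLIntegral_congr_fun measurableSet_Ioi fun y hy => ?_
        rw [lintegral_indicator_const₀ (nullMeasurableSet_lt aemeasurable_const ha),
          Measure.restrict_apply' measurableSet_Ioi, mul_comm,
          hG.volume_setOf_lt_upperInv (hS.upperInv_pos (hG.tendsto_add_nhdsGT_zero hh₀) hy)]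

theorem setLIntegral_exp_neg_eq_lintegral_upperInv [IsProbabilityMeasure μ]
    (hh : IsTailExponent h) (hh₀ : Tendsto h (𝓝[>] 0) atTop) (hG : IsTailExponent G)
    (hμ : ∀ x, 0 < x → μ (Iic x) = ENNReal.ofReal (Real.exp (-h x))) (hμ₀ : μ (Iic 0) = 0) :
    ∫⁻ x in Ioi 0, ENNReal.ofReal (Real.exp (-G x)) ∂μ
      = ∫⁻ y in Ioi 0, ENNReal.ofReal (h (upperInv (h + G) y) * Real.exp (-y)) := by
  have hS := hh.add hG
  have hS₀ := hG.tendsto_add_nhdsGT_zero hh₀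
  have hexp : Measurable fun y : ℝ => ENNReal.ofReal (Real.exp (-y)) := by fun_prop
  have hK : ∫⁻ u in Ioi 0, μ (Iic (upperInv G u)) * ENNReal.ofReal (Real.exp (-u)) ≠ ∞ := by
    refine ne_top_of_le_ne_top ENNReal.one_ne_top ?_
    rw [← lintegral_exp_neg_Ioi_zero]
    exact lintegral_mono fun u => mul_le_of_le_one_left' prob_le_one
  have hLHS : (∫⁻ x in Ioi 0, ENNReal.ofReal (Real.exp (-G x)) ∂μ)
      + ∫⁻ u in Ioi 0, μ (Iic (upperInv G u)) * ENNReal.ofReal (Real.exp (-u)) = 1 := by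
    have hmeas : AEMeasurable (fun u => μ (Iic (upperInv G u)) * ENNReal.ofReal (Real.exp (-u)))
        (volume.restrict (Ioi 0)) :=
      (aemeasurable_restrict_of_antitoneOn measurableSet_Ioi fun u hu v hv huv =>
        measure_mono (Set.Iic_subset_Iic.2 (hG.upperInv_antitoneOn hu hv huv))).mul
          hexp.aemeasurable
    rw [setLIntegral_exp_neg_eq_lintegral_measure_setOf_lt μ hG.continuousOn fun _ => hG.nonneg,
      ← lintegral_add_right' _ hmeas, ← lintegral_exp_neg_Ioi_zero]
    refine setLIntegral_congr_fun measurableSet_Ioi fun y hy => ?_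
    rw [hG.setOf_lt_eq_Ioi_upperInv hy, ← add_mul, ← compl_Iic, add_comm,
      measure_add_measure_compl measurableSet_Iic, measure_univ, one_mul]
  have hRHS : (∫⁻ y in Ioi 0, ENNReal.ofReal (h (upperInv (h + G) y) * Real.exp (-y)))
      + ∫⁻ u in Ioi 0, μ (Iic (upperInv G u)) * ENNReal.ofReal (Real.exp (-u)) = 1 := by
    have hmeas : AEMeasurable
        (fun y => ENNReal.ofReal (G (upperInv (h + G) y)) * ENNReal.ofReal (Real.exp (-y)))
        (volume.restrict (Ioi 0)) :=
      (aemeasurable_restrict_of_monotoneOn measurableSet_Ioi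
        (hS.monotoneOn_comp_upperInv hS₀ hG.antitoneOn)).ennreal_ofReal.mul hexp.aemeasurable
    rw [setLIntegral_measure_Iic_upperInv_mul_exp_neg hh hh₀ hG hμ hμ₀,
      ← lintegral_add_right' _ hmeas, ← lintegral_mul_exp_neg_Ioi_zero]
    refine setLIntegral_congr_fun measurableSet_Ioi fun y hy => ?_
    have hpos := hS.upperInv_pos hS₀ hy
    rw [← ENNReal.ofReal_mul (hG.nonneg hpos), ← ENNReal.ofReal_add
      (mul_nonneg (hh.nonneg hpos) (Real.exp_pos _).le)
      (mul_nonneg (hG.nonneg hpos) (Real.exp_pos _).le),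
      ← add_mul, ← Pi.add_apply h G, hS.apply_upperInv hy hpos]
  exact (ENNReal.add_left_inj hK).1 (hLHS.trans hRHS.symm)

theorem toReal_setLIntegral_exp_neg_eq_integral_upperInv [IsProbabilityMeasure μ]
    (hh : IsTailExponent h) (hh₀ : Tendsto h (𝓝[>] 0) atTop) (hG : IsTailExponent G)
    (hμ : ∀ x, 0 < x → μ (Iic x) = ENNReal.ofReal (Real.exp (-h x))) (hμ₀ : μ (Iic 0) = 0) :
    (∫⁻ x in Ioi 0, ENNReal.ofReal (Real.exp (-G x)) ∂μ).toReal
      = ∫ y in Ioi 0, h (upperInv (h + G) y) * Real.exp (-y) := by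
  have hS := hh.add hG
  have hS₀ := hG.tendsto_add_nhdsGT_zero hh₀
  rw [setLIntegral_exp_neg_eq_lintegral_upperInv hh hh₀ hG hμ hμ₀,
    integral_eq_lintegral_of_nonneg_ae]
  · exact (ae_restrict_iff' measurableSet_Ioi).2 (Eventually.of_forall fun y hy =>
      mul_nonneg (hh.nonneg (hS.upperInv_pos hS₀ hy)) (Real.exp_pos _).le)
  · exact ((aemeasurable_restrict_of_monotoneOn measurableSet_Ioi
      (hS.monotoneOn_comp_upperInv hS₀ hh.antitoneOn)).mul
      (by fun_prop : Measurable fun y : ℝ => Real.exp (-y)).aemeasurable).aestronglyMeasurable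

end CDF

theorem MeasureTheory.Measure.pi_setOf_forall_le {m : ℕ} (μ : Fin (m + 1) → Measure ℝ)
    [∀ j, SigmaFinite (μ j)] (i : Fin (m + 1)) :
    Measure.pi μ {v | ∀ j, v j ≤ v i} = ∫⁻ x, ∏ k, μ (i.succAbove k) (Iic x) ∂μ i := by
  have hmeas : MeasurableSet {p : ℝ × (Fin m → ℝ) | ∀ k, p.2 k ≤ p.1} := by
    rw [ofPred_forall]
    exact MeasurableSet.iInter fun k => measurableSet_le (by fun_prop) (by fun_prop)
  have hpre : {v : Fin (m + 1) → ℝ | ∀ j, v j ≤ v i}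
      = MeasurableEquiv.piFinSuccAbove (fun _ => ℝ) i ⁻¹' {p | ∀ k, p.2 k ≤ p.1} := by
    ext v
    simp [i.forall_iff_succAbove, Fin.removeNth]
  rw [hpre, (measurePreserving_piFinSuccAbove μ i).measure_preimage hmeas.nullMeasurableSet,
    Measure.prod_apply hmeas]
  refine lintegral_congr fun x => ?_
  rw [show Prod.mk x ⁻¹' {p : ℝ × (Fin m → ℝ) | ∀ k, p.2 k ≤ p.1} = Set.pi Set.univ fun _ => Iic x
    by ext; simp [Pi.le_def], Measure.pi_pi]

theorem ProbabilityTheory.iIndepFun.measure_forall_le {Ω : Type*} [MeasurableSpace Ω]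
    {P : Measure Ω} {m : ℕ} {X : Fin (m + 1) → Ω → ℝ} (hind : iIndepFun X P)
    (hX : ∀ j, Measurable (X j)) (i : Fin (m + 1)) :
    P {ω | ∀ j, X j ω ≤ X i ω} = ∫⁻ x, ∏ k, P {ω | X (i.succAbove k) ω ≤ x} ∂P.map (X i) := by
  have := hind.isProbabilityMeasure
  have hmeas : MeasurableSet {v : Fin (m + 1) → ℝ | ∀ j, v j ≤ v i} := by
    rw [ofPred_forall]
    exact MeasurableSet.iInter fun j => measurableSet_le (by fun_prop) (by fun_prop)
  rw [show {ω | ∀ j, X j ω ≤ X i ω} = (fun ω j => X j ω) ⁻¹' {v | ∀ j, v j ≤ v i} from rfl,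
    ← Measure.map_apply (measurable_pi_lambda _ hX) hmeas,
    hind.map_fun_eq_pi_map fun j => (hX j).aemeasurable, Measure.pi_setOf_forall_le]
  simp_rw [Measure.map_apply (hX _) measurableSet_Iic]
  rfl

theorem ProbabilityTheory.iIndepFun.measure_forall_le_eq_setLIntegral_exp_neg {Ω : Type*}
    [MeasurableSpace Ω] {P : Measure Ω} {m : ℕ} {X : Fin (m + 1) → Ω → ℝ} (hind : iIndepFun X P)
    (hX : ∀ j, Measurable (X j)) {ν : Fin (m + 1) → ℝ → ℝ}
    (hcdf : ∀ j x, 0 < x → P {ω | X j ω ≤ x} = ENNReal.ofReal (Real.exp (-ν j x)))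
    (i : Fin (m + 1)) (hi : P {ω | X i ω ≤ 0} = 0) :
    P {ω | ∀ j, X j ω ≤ X i ω}
      = ∫⁻ x in Ioi 0, ENNReal.ofReal (Real.exp (-∑ k, ν (i.succAbove k) x)) ∂P.map (X i) := by
  have hpos : ∀ᵐ x ∂P.map (X i), x ∈ Ioi (0 : ℝ) := by
    rw [ae_iff]
    change P.map (X i) (Ioi 0)ᶜ = 0
    rwa [compl_Ioi, Measure.map_apply (hX i) measurableSet_Iic]
  rw [hind.measure_forall_le hX i]
  conv_lhs => rw [← Measure.restrict_eq_self_of_ae_mem hpos]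
  refine setLIntegral_congr_fun measurableSet_Ioi fun x hx => ?_
  rw [prod_congr rfl fun k _ => hcdf _ x hx, ← ENNReal.ofReal_prod_of_nonneg fun k _ =>
    (Real.exp_pos _).le, ← Real.exp_sum, sum_neg_distrib]

/-- **basic formula.** Let `ν 1, …, ν n` be continuous, non-increasing
functions on `(0, ∞)` with `ν i x → ∞` as `x → 0⁺` and `ν i x → 0` as `x → ∞`, and let
`X 1, …, X n` be independent random variables with distribution functions
`F i x = exp (-(ν i x))` for `x > 0` and `F i 0 = 0`.  With
`x_n(y) = sup {x | Σ_{i=1}^n ν i x ≥ y}` the generalized inverse of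
`x ↦ Σ_{i=1}^n ν i x`, one has
`P(X i = max (X 1, …, X n)) = ∫_0^∞ ν i (x_n y) * exp (-y) dy` for every `i`. -/
theorem argmax_prob_basic_formula
    {Ω : Type*} [MeasureSpace Ω] [IsProbabilityMeasure (ℙ : Measure Ω)]
    (n : ℕ) (hn : 0 < n) (X : Fin n → Ω → ℝ)
    (hXmeas : ∀ i, Measurable (X i))
    (hindep : iIndepFun X ℙ)
    (ν : Fin n → ℝ → ℝ)
    (hν_cont : ∀ i, ContinuousOn (ν i) (Set.Ioi 0))
    (hν_mono : ∀ i, ∀ x y, 0 < x → x ≤ y → ν i y ≤ ν i x)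
    (hν_zero : ∀ i, Tendsto (ν i) (𝓝[>] (0 : ℝ)) atTop)
    (hν_infty : ∀ i, Tendsto (ν i) atTop (𝓝 0))
    (hF : ∀ i x, 0 < x → (ℙ {ω | X i ω ≤ x}).toReal = Real.exp (-(ν i x)))
    (hF0 : ∀ i, ℙ {ω | X i ω ≤ 0} = 0) :
    ∀ i, (ℙ {ω | X i ω =
        Finset.univ.sup' (Finset.univ_nonempty_iff.mpr ⟨⟨0, hn⟩⟩) (fun j => X j ω)}).toReal
      = ∫ y in Set.Ioi (0 : ℝ),
          ν i (sSup {x : ℝ | 0 < x ∧ y ≤ ∑ j, ν j x}) * Real.exp (-y) := by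
  intro i
  obtain ⟨m, rfl⟩ := Nat.exists_eq_succ_of_ne_zero hn.ne'
  have hν : ∀ j, IsTailExponent (ν j) := fun j =>
    ⟨hν_cont j, fun x hx y _ hxy => hν_mono j x y hx hxy, hν_infty j⟩
  have hcdf : ∀ j x, 0 < x → ℙ {ω | X j ω ≤ x} = ENNReal.ofReal (Real.exp (-ν j x)) :=
    fun j x hx => by rw [← hF j x hx, ENNReal.ofReal_toReal (measure_ne_top _ _)]
  have hargmax : {ω | X i ω = Finset.univ.sup' (Finset.univ_nonempty_iff.mpr ⟨⟨0, hn⟩⟩) (X · ω)}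
      = {ω | ∀ j, X j ω ≤ X i ω} := by
    ext ω
    exact ⟨fun h j => h ▸ le_sup' (X · ω) (mem_univ j),
      fun h => le_antisymm (le_sup' (X · ω) (mem_univ i)) (sup'_le _ _ fun j _ => h j)⟩
  have : IsProbabilityMeasure ((ℙ : Measure Ω).map (X i)) :=
    Measure.isProbabilityMeasure_map (hXmeas i).aemeasurable
  have hlaw : ∀ x, (ℙ : Measure Ω).map (X i) (Iic x) = ℙ {ω | X i ω ≤ x} := fun x =>
    Measure.map_apply (hXmeas i) measurableSet_Iic
  have hsum : ν i + (fun x => ∑ k, ν (i.succAbove k) x) = fun x => ∑ j, ν j x :=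
    funext fun x => (i.sum_univ_succAbove (ν · x)).symm
  rw [hargmax, hindep.measure_forall_le_eq_setLIntegral_exp_neg hXmeas hcdf i (hF0 i),
    toReal_setLIntegral_exp_neg_eq_integral_upperInv (hν i) (hν_zero i)
      (IsTailExponent.sum univ fun k _ => hν (i.succAbove k))
      (fun x hx => (hlaw x).trans (hcdf i x hx)) ((hlaw 0).trans (hF0 i)), hsum]
  rfl
end

section
/- (Theorem 3, part A.) Let c_1, c_2, ... be non-negative numbers with b_n := Σ_{i=1}^n c_i → ∞, set α_{in} = c_i / b_n, and suppose the measures α_n = Σ_{i=1}^n α_{in} δ_{i/n} on [0,1] converge weakly to a probability measure α with distribution function F. Suppose moreover that b_{n+1}/b_n → 1 as n → ∞. Then there exists ρ with 0 ≤ ρ ≤ ∞ such that F(x) = x^ρ for x ∈ [0,1] (with the conventions that if ρ = 0 then F(x) = 1 for all x ∈ (0,1], and if ρ = ∞ then F(x) = 0 for all x < 1 and F(1) = 1), and the piecewise-constant function b(t) defined by b(t) = b_n for t ∈ [n, n+1) is regularly varying: b(tx)/b(t) → x^ρ as t → ∞ for every x > 0 (interpreting x^∞ = 0 for x < 1 and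 = ∞ for x > 1). -/
open MeasureTheory Filter Topology ENNReal

/-!
Write `b n` for the partial sums and `F` for the distribution function of `α`. Testing the weak
convergence against a continuous ramp equal to `1` on `(-∞, u]` and to `0` on `[v, ∞)` squeezes
`b ⌊n u⌋ / b n` between values of `F`. If `F u > 0` for some `u ∈ (0, 1)`, take such a ramp `g`
with `v = 1`: then `∫ g (t / l) dα_n = (b ⌊n l⌋ / b n) ∫ g dα_{⌊n l⌋}` up to rounding, which
`b (m + 1) / b m → 1` absorbs, so `b ⌊n l⌋ / b n` converges for every `l ∈ (0, 1]`. Along real `t`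
the limit of `b (t x) / b t` is automatically multiplicative and monotone in `x`, hence equal to
`x ^ ρ`, and the squeeze gives `F x = x ^ ρ`. If instead `F` vanishes on `(0, 1)`, the squeeze
forces `b ⌊n l⌋ / b n → 0`: this is the case `ρ = ∞`.
-/

namespace RegularVariation

noncomputable def ramp (u v t : ℝ) : ℝ := max 0 (min 1 ((v - t) / (v - u)))

lemma ramp_nonneg (u v t : ℝ) : 0 ≤ ramp u v t := le_max_left _ _

lemma ramp_le_one (u v t : ℝ) : ramp u v t ≤ 1 := max_le zero_le_one (min_le_left _ _)

lemma abs_ramp_le_one (u v t : ℝ) : |ramp u v t| ≤ 1 := by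
  rw [abs_of_nonneg (ramp_nonneg u v t)]
  exact ramp_le_one u v t

lemma continuous_ramp (u v : ℝ) : Continuous (ramp u v) := by
  unfold ramp
  fun_prop

lemma antitone_ramp {u v : ℝ} (huv : u < v) : Antitone (ramp u v) := fun s t hst => by
  have : 0 < v - u := sub_pos.2 huv
  unfold ramp
  gcongr

lemma ramp_of_le {u v t : ℝ} (huv : u < v) (ht : t ≤ u) : ramp u v t = 1 := by
  have : 1 ≤ (v - t) / (v - u) := by rw [le_div_iff₀ (sub_pos.2 huv)]; linarith
  simp [ramp, min_eq_left this]

lemma ramp_of_ge {u v t : ℝ} (huv : u < v) (ht : v ≤ t) : ramp u v t = 0 := by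
  have : (v - t) / (v - u) ≤ 0 := div_nonpos_of_nonpos_of_nonneg (by linarith) (by linarith)
  simp [ramp, min_eq_right (this.trans zero_le_one), this]

lemma integrable_ramp (u v : ℝ) (α : Measure ℝ) [IsFiniteMeasure α] : Integrable (ramp u v) α :=
  .of_bound (continuous_ramp u v).aestronglyMeasurable 1 (.of_forall (abs_ramp_le_one u v))

lemma measureReal_Iic_le_integral_ramp {u v : ℝ} (huv : u < v) (α : Measure ℝ)
    [IsFiniteMeasure α] : α.real (Set.Iic u) ≤ ∫ t, ramp u v t ∂α := by
  rw [← integral_indicator_one measurableSet_Iic]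
  refine integral_mono ((integrable_const 1).indicator measurableSet_Iic) (integrable_ramp u v α)
    fun t => Set.indicator_apply_le' (fun ht => (ramp_of_le huv ht).ge) fun _ => ramp_nonneg ..

lemma integral_ramp_le_measureReal_Iic {u v : ℝ} (huv : u < v) (α : Measure ℝ)
    [IsFiniteMeasure α] : ∫ t, ramp u v t ∂α ≤ α.real (Set.Iic v) := by
  rw [← integral_indicator_one measurableSet_Iic]
  refine integral_mono (integrable_ramp u v α) ((integrable_const 1).indicator measurableSet_Iic)
    fun t => Set.le_indicator_apply (fun _ => ramp_le_one ..) fun ht =>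
      (ramp_of_ge huv (le_of_lt (not_le.1 ht))).le

def partialSum (c : ℕ → ℝ) (n : ℕ) : ℝ := ∑ i ∈ Finset.Icc 1 n, c i

/-- `∫ h dα_n`, where `α_n = ∑ i ∈ [1, n], (c i / b n) δ_{i/n}`. -/
noncomputable def discreteIntegral (c : ℕ → ℝ) (h : ℝ → ℝ) (n : ℕ) : ℝ :=
  ∑ i ∈ Finset.Icc 1 n, h (i / n) * (c i / partialSum c n)

def HasWeakLimit (c : ℕ → ℝ) (α : Measure ℝ) : Prop :=
  ∀ h : ℝ → ℝ, Continuous h → (∃ C, ∀ x, |h x| ≤ C) →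
    Tendsto (discreteIntegral c h) atTop (𝓝 (∫ x, h x ∂α))

section partialSum

variable {c : ℕ → ℝ}

lemma partialSum_nonneg (hc : ∀ i, 0 ≤ c i) (n : ℕ) : 0 ≤ partialSum c n :=
  Finset.sum_nonneg fun i _ => hc i

lemma monotone_partialSum (hc : ∀ i, 0 ≤ c i) : Monotone (partialSum c) := fun _ _ h =>
  Finset.sum_le_sum_of_subset_of_nonneg (Finset.Icc_subset_Icc_right h) fun i _ _ => hc i

lemma discreteIntegral_eq (c : ℕ → ℝ) (h : ℝ → ℝ) (n : ℕ) :
    discreteIntegral c h n = (∑ i ∈ Finset.Icc 1 n, h (i / n) * c i) / partialSum c n := by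
  simp only [discreteIntegral, Finset.sum_div, mul_div_assoc]

lemma floor_natCast_mul_le (n : ℕ) {l : ℝ} (hl : l ≤ 1) : ⌊(n : ℝ) * l⌋₊ ≤ n :=
  Nat.floor_le_of_le (mul_le_of_le_one_right n.cast_nonneg hl)

lemma sum_Icc_eq_sum_Icc_floor {g : ℝ → ℝ} {v x : ℝ} (hx : 0 < x)
    (hg : ∀ t, v ≤ t → g t = 0) {n : ℕ} (hn : ⌊x * v⌋₊ ≤ n) :
    ∑ i ∈ Finset.Icc 1 n, g (i / x) * c i = ∑ i ∈ Finset.Icc 1 ⌊x * v⌋₊, g (i / x) * c i := by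
  refine (Finset.sum_subset (Finset.Icc_subset_Icc_right hn) fun i hin hi => ?_).symm
  have : x * v < i := Nat.lt_of_floor_lt (by simp only [Finset.mem_Icc] at hin hi; omega)
  rw [hg _ ((le_div_iff₀ hx).2 (by linarith)), zero_mul]

lemma partialSum_floor_div_le_discreteIntegral_ramp (hc : ∀ i, 0 ≤ c i) {u v : ℝ} (huv : u < v)
    (hu : u ≤ 1) (n : ℕ) :
    partialSum c ⌊n * u⌋₊ / partialSum c n ≤ discreteIntegral c (ramp u v) n := by
  rw [discreteIntegral_eq]
  rcases Nat.eq_zero_or_pos n with rfl | hn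
  · simp [partialSum]
  gcongr
  · exact partialSum_nonneg hc n
  calc partialSum c ⌊n * u⌋₊ = ∑ i ∈ Finset.Icc 1 ⌊n * u⌋₊, ramp u v (i / n) * c i := by
        refine Finset.sum_congr rfl fun i hi => ?_
        obtain ⟨hi1, hin⟩ := Finset.mem_Icc.1 hi
        have hiu : (i : ℝ) ≤ n * u := (Nat.le_floor_iff' (by omega)).1 hin
        rw [ramp_of_le huv ((div_le_iff₀' (by exact_mod_cast hn)).2 hiu), one_mul]
    _ ≤ ∑ i ∈ Finset.Icc 1 n, ramp u v (i / n) * c i :=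
        Finset.sum_le_sum_of_subset_of_nonneg
          (Finset.Icc_subset_Icc_right (floor_natCast_mul_le n hu))
          fun i _ _ => mul_nonneg (ramp_nonneg ..) (hc i)

lemma discreteIntegral_ramp_le (hc : ∀ i, 0 ≤ c i) {u v : ℝ} (huv : u < v) (hv : v ≤ 1) (n : ℕ) :
    discreteIntegral c (ramp u v) n ≤ partialSum c ⌊n * v⌋₊ / partialSum c n := by
  rw [discreteIntegral_eq]
  rcases Nat.eq_zero_or_pos n with rfl | hn
  · simp [partialSum]
  gcongr
  · exact partialSum_nonneg hc n
  rw [sum_Icc_eq_sum_Icc_floor (by exact_mod_cast hn) (fun t => ramp_of_ge huv)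
    (floor_natCast_mul_le n hv)]
  exact Finset.sum_le_sum fun i _ => mul_le_of_le_one_left (hc i) (ramp_le_one ..)

end partialSum

noncomputable def stepRatio (S : ℕ → ℝ) (x t : ℝ) : ℝ := S ⌊t * x⌋₊ / S ⌊t⌋₊

section stepRatio

variable {S : ℕ → ℝ}

lemma tendsto_add_div (hS : Monotone S) (hpos : ∀ᶠ n in atTop, 0 < S n)
    (hr : Tendsto (fun n => S (n + 1) / S n) atTop (𝓝 1)) (k : ℕ) :
    Tendsto (fun n => S (n + k) / S n) atTop (𝓝 1) := by
  induction k with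
  | zero =>
    refine tendsto_const_nhds.congr' ?_
    filter_upwards [hpos] with n hn
    simp [hn.ne']
  | succ k ih =>
    have hstep := (hr.comp (tendsto_add_atTop_nat k)).mul ih
    rw [one_mul] at hstep
    refine hstep.congr' ?_
    filter_upwards [hpos] with n hn
    have : 0 < S (n + k) := hn.trans_le (hS (Nat.le_add_right n k))
    simp only [Function.comp_apply, ← add_assoc]
    exact div_mul_div_cancel₀ this.ne'

lemma tendsto_div_of_le_of_le_add (hS : Monotone S) (hpos : ∀ᶠ n in atTop, 0 < S n)
    (hr : Tendsto (fun n => S (n + 1) / S n) atTop (𝓝 1)) {ι : Type*} {l : Filter ι}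
    {a b : ι → ℕ} {k : ℕ} (ha : Tendsto a l atTop) (hab : ∀ᶠ i in l, a i ≤ b i)
    (hba : ∀ᶠ i in l, b i ≤ a i + k) : Tendsto (fun i => S (b i) / S (a i)) l (𝓝 1) := by
  refine tendsto_of_tendsto_of_tendsto_of_le_of_le' tendsto_const_nhds
    ((tendsto_add_div hS hpos hr k).comp ha) ?_ ?_
  · filter_upwards [ha.eventually hpos, hab] with i hai hi
    exact (one_le_div hai).2 (hS hi)
  · filter_upwards [ha.eventually hpos, hba] with i hai hi
    exact div_le_div_of_nonneg_right (hS hi) hai.le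

lemma tendsto_stepRatio_of_nat (hS : Monotone S) (hpos : ∀ᶠ n in atTop, 0 < S n)
    (hr : Tendsto (fun n => S (n + 1) / S n) atTop (𝓝 1)) {x L : ℝ} (hx : 0 < x)
    (h : Tendsto (fun n : ℕ => S ⌊n * x⌋₊ / S n) atTop (𝓝 L)) :
    Tendsto (stepRatio S x) atTop (𝓝 L) := by
  set a : ℝ → ℕ := fun t => ⌊(⌊t⌋₊ : ℝ) * x⌋₊
  have ha : Tendsto a atTop atTop := tendsto_nat_floor_atTop.comp
    ((tendsto_natCast_atTop_atTop.atTop_mul_const hx).comp tendsto_nat_floor_atTop)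
  have hfloor : Tendsto (fun t => S ⌊t * x⌋₊ / S (a t)) atTop (𝓝 1) := by
    refine tendsto_div_of_le_of_le_add hS hpos hr (k := ⌈x⌉₊) ha ?_ ?_ <;>
      filter_upwards [eventually_ge_atTop 0] with t ht
    · exact Nat.floor_le_floor (by gcongr; exact Nat.floor_le ht)
    · calc ⌊t * x⌋₊ ≤ ⌊(⌊t⌋₊ : ℝ) * x + ⌈x⌉₊⌋₊ := by
            refine Nat.floor_le_floor ?_
            nlinarith [Nat.lt_floor_add_one t, Nat.le_ceil x]
        _ = a t + ⌈x⌉₊ := Nat.floor_add_natCast (by positivity) _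
  have hprod := hfloor.mul (h.comp tendsto_nat_floor_atTop)
  rw [one_mul] at hprod
  refine hprod.congr' ?_
  filter_upwards [ha.eventually hpos] with t hat
  exact div_mul_div_cancel₀ hat.ne'

lemma tendsto_stepRatio_one (hpos : ∀ᶠ n in atTop, 0 < S n) :
    Tendsto (stepRatio S 1) atTop (𝓝 1) := by
  refine tendsto_const_nhds.congr' ?_
  filter_upwards [tendsto_nat_floor_atTop.eventually hpos] with t ht
  simp [stepRatio, ht.ne']

lemma tendsto_stepRatio_mul (hpos : ∀ᶠ n in atTop, 0 < S n) {x y a b : ℝ} (hx : 0 < x)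
    (ha : Tendsto (stepRatio S x) atTop (𝓝 a)) (hb : Tendsto (stepRatio S y) atTop (𝓝 b)) :
    Tendsto (stepRatio S (x * y)) atTop (𝓝 (b * a)) := by
  have hx_top : Tendsto (fun t => t * x) atTop atTop := tendsto_id.atTop_mul_const hx
  refine ((hb.comp hx_top).mul ha).congr' ?_
  filter_upwards [(tendsto_nat_floor_atTop.comp hx_top).eventually hpos] with t ht
  simp only [stepRatio, Function.comp_apply, mul_assoc]
  exact div_mul_div_cancel₀ ht.ne'

lemma tendsto_stepRatio_pow (hpos : ∀ᶠ n in atTop, 0 < S n) {x a : ℝ} (hx : 0 < x)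
    (ha : Tendsto (stepRatio S x) atTop (𝓝 a)) (k : ℕ) :
    Tendsto (stepRatio S (x ^ k)) atTop (𝓝 (a ^ k)) := by
  induction k with
  | zero => simpa using tendsto_stepRatio_one hpos
  | succ k ih =>
    rw [pow_succ, pow_succ']
    exact tendsto_stepRatio_mul hpos (pow_pos hx k) ih ha

lemma tendsto_stepRatio_inv {x L : ℝ} (hx : 0 < x) (hL : L ≠ 0)
    (h : Tendsto (stepRatio S x) atTop (𝓝 L)) :
    Tendsto (stepRatio S x⁻¹) atTop (𝓝 L⁻¹) := by
  refine ((h.comp (tendsto_id.atTop_mul_const (inv_pos.2 hx))).inv₀ hL).congr fun t => ?_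
  simp [stepRatio, mul_assoc, inv_mul_cancel₀ hx.ne']

lemma tendsto_stepRatio_inv_atTop (hpos : ∀ᶠ n in atTop, 0 < S n) {x : ℝ} (hx : 0 < x)
    (h : Tendsto (stepRatio S x) atTop (𝓝 0)) : Tendsto (stepRatio S x⁻¹) atTop atTop := by
  have hx_top : Tendsto (fun t => t * x⁻¹) atTop atTop := tendsto_id.atTop_mul_const (inv_pos.2 hx)
  have hpos' : ∀ᶠ t in atTop, 0 < stepRatio S x (t * x⁻¹) := by
    filter_upwards [tendsto_nat_floor_atTop.eventually hpos,
      (tendsto_nat_floor_atTop.comp hx_top).eventually hpos] with t h1 h2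
    simp only [stepRatio, mul_assoc, inv_mul_cancel₀ hx.ne', mul_one]
    exact div_pos h1 h2
  refine (tendsto_nhdsWithin_iff.2 ⟨h.comp hx_top, hpos'⟩).inv_tendsto_nhdsGT_zero.congr
    fun t => ?_
  simp [stepRatio, mul_assoc, inv_mul_cancel₀ hx.ne']

lemma le_of_tendsto_stepRatio (hS : Monotone S) (hpos : ∀ᶠ n in atTop, 0 < S n) {x y a b : ℝ}
    (hxy : x ≤ y) (ha : Tendsto (stepRatio S x) atTop (𝓝 a))
    (hb : Tendsto (stepRatio S y) atTop (𝓝 b)) : a ≤ b := by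
  refine le_of_tendsto_of_tendsto ha hb ?_
  filter_upwards [tendsto_nat_floor_atTop.eventually hpos, eventually_ge_atTop 0] with t ht ht0
  exact div_le_div_of_nonneg_right (hS (Nat.floor_le_floor (by gcongr))) ht.le

lemma pos_of_tendsto_stepRatio (hS : Monotone S) (hpos : ∀ᶠ n in atTop, 0 < S n)
    {w x a b : ℝ} (hw : w ∈ Set.Ioo 0 1) (hx : 0 < x) (hb : 0 < b)
    (hwb : Tendsto (stepRatio S w) atTop (𝓝 b)) (hxa : Tendsto (stepRatio S x) atTop (𝓝 a)) :
    0 < a := by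
  obtain ⟨k, hk⟩ := exists_pow_lt_of_lt_one hx hw.2
  exact (pow_pos hb k).trans_le
    (le_of_tendsto_stepRatio hS hpos hk.le (tendsto_stepRatio_pow hpos hw.1 hwb k) hxa)

lemma exists_rpow_of_map_mul {r : ℝ → ℝ} (hpos : ∀ x, 0 < x → 0 < r x)
    (hmul : ∀ x y, 0 < x → 0 < y → r (x * y) = r x * r y) (hmono : MonotoneOn r (Set.Ioi 0)) :
    ∃ ρ : ℝ, 0 ≤ ρ ∧ ∀ x, 0 < x → r x = x ^ ρ := by
  let G : ℝ →+ ℝ := AddMonoidHom.mk' (fun s => Real.log (r (Real.exp s))) fun s t => by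
    simp only [Real.exp_add, hmul _ _ (Real.exp_pos s) (Real.exp_pos t)]
    exact Real.log_mul (hpos _ (Real.exp_pos s)).ne' (hpos _ (Real.exp_pos t)).ne'
  have hG_mono : Monotone G := fun s t hst =>
    Real.log_le_log (hpos _ (Real.exp_pos s))
      (hmono (Real.exp_pos s) (Real.exp_pos t) (Real.exp_le_exp.2 hst))
  -- a monotone additive map is measurable, hence continuous, hence linear
  have hG_lin (s : ℝ) : G s = s * G 1 := by
    simpa using map_real_smul G
      (Measure.AddMonoidHom.continuous_of_measurable G hG_mono.measurable) s 1
  refine ⟨G 1, by simpa using hG_mono zero_le_one, fun x hx => ?_⟩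
  have hGx : Real.log (r x) = Real.log x * G 1 := by
    simpa [G, Real.exp_log hx] using hG_lin (Real.log x)
  rw [Real.rpow_def_of_pos hx, ← hGx, Real.exp_log (hpos x hx)]

lemma exists_tendsto_stepRatio_rpow_of_pos (hS : Monotone S) (hpos : ∀ᶠ n in atTop, 0 < S n)
    {φ : ℝ → ℝ} (hφ : ∀ x ∈ Set.Ioc 0 1, Tendsto (stepRatio S x) atTop (𝓝 (φ x)))
    (hφ_pos : ∀ x ∈ Set.Ioc 0 1, 0 < φ x) :
    ∃ ρ : ℝ, 0 ≤ ρ ∧ ∀ x, 0 < x → Tendsto (stepRatio S x) atTop (𝓝 (x ^ ρ)) := by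
  let r : ℝ → ℝ := fun x => if x ≤ 1 then φ x else (φ x⁻¹)⁻¹
  have hr (x : ℝ) (hx : 0 < x) : 0 < r x ∧ Tendsto (stepRatio S x) atTop (𝓝 (r x)) := by
    by_cases h1 : x ≤ 1
    · rw [show r x = φ x from if_pos h1]
      exact ⟨hφ_pos x ⟨hx, h1⟩, hφ x ⟨hx, h1⟩⟩
    · have hx' : x⁻¹ ∈ Set.Ioc 0 1 := ⟨inv_pos.2 hx, inv_le_one_of_one_le₀ (le_of_not_ge h1)⟩
      have := tendsto_stepRatio_inv hx'.1 (hφ_pos _ hx').ne' (hφ _ hx')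
      rw [inv_inv] at this
      rw [show r x = (φ x⁻¹)⁻¹ from if_neg h1]
      exact ⟨inv_pos.2 (hφ_pos _ hx'), this⟩
  obtain ⟨ρ, hρ, hrρ⟩ := exists_rpow_of_map_mul (fun x hx => (hr x hx).1)
    (fun x y hx hy => by
      rw [tendsto_nhds_unique (hr (x * y) (mul_pos hx hy)).2
        (tendsto_stepRatio_mul hpos hx (hr x hx).2 (hr y hy).2), mul_comm])
    (fun x hx y hy hxy => le_of_tendsto_stepRatio hS hpos hxy (hr x hx).2 (hr y hy).2)
  exact ⟨ρ, hρ, fun x hx => hrρ x hx ▸ (hr x hx).2⟩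

end stepRatio

section weakLimit

variable {c : ℕ → ℝ} {α : Measure ℝ}

lemma measureReal_Iic_le_of_tendsto [IsFiniteMeasure α] (hc : ∀ i, 0 ≤ c i)
    (hα : HasWeakLimit c α) {u v L : ℝ} (huv : u < v) (hv : v ≤ 1)
    (hL : Tendsto (fun n : ℕ => partialSum c ⌊n * v⌋₊ / partialSum c n) atTop (𝓝 L)) :
    α.real (Set.Iic u) ≤ L :=
  (measureReal_Iic_le_integral_ramp huv α).trans <| le_of_tendsto_of_tendsto'
    (hα _ (continuous_ramp u v) ⟨1, abs_ramp_le_one u v⟩) hL (discreteIntegral_ramp_le hc huv hv)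

lemma le_measureReal_Iic_of_tendsto [IsFiniteMeasure α] (hc : ∀ i, 0 ≤ c i)
    (hα : HasWeakLimit c α) {u v L : ℝ} (huv : u < v) (hu : u ≤ 1)
    (hL : Tendsto (fun n : ℕ => partialSum c ⌊n * u⌋₊ / partialSum c n) atTop (𝓝 L)) :
    L ≤ α.real (Set.Iic v) :=
  (le_of_tendsto_of_tendsto' hL (hα _ (continuous_ramp u v) ⟨1, abs_ramp_le_one u v⟩)
    (partialSum_floor_div_le_discreteIntegral_ramp hc huv hu)).trans
    (integral_ramp_le_measureReal_Iic huv α)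

lemma tendsto_floor_natCast_mul_atTop {l : ℝ} (hl : 0 < l) :
    Tendsto (fun n : ℕ => ⌊(n : ℝ) * l⌋₊) atTop atTop :=
  tendsto_nat_floor_atTop.comp (tendsto_natCast_atTop_atTop.atTop_mul_const hl)

/-- Since `⌊n l⌋ ≤ n l < ⌊n l⌋ + 1`, this sum lies between the `α`-integrals of the ramp at
`⌊n l⌋` and at `⌊n l⌋ + 1`, up to the factor `b (⌊n l⌋ + 1) / b ⌊n l⌋ → 1`. -/
lemma tendsto_sum_ramp_div_partialSum_floor (hc : ∀ i, 0 ≤ c i)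
    (hpos : ∀ᶠ n in atTop, 0 < partialSum c n)
    (hr : Tendsto (fun n => partialSum c (n + 1) / partialSum c n) atTop (𝓝 1))
    (hα : HasWeakLimit c α) {u v l : ℝ} (huv : u < v) (hl : 0 < l) :
    Tendsto (fun n : ℕ => (∑ i ∈ Finset.Icc 1 ⌊n * l⌋₊, ramp u v (i / (n * l)) * c i) /
      partialSum c ⌊n * l⌋₊) atTop (𝓝 (∫ t, ramp u v t ∂α)) := by
  set m : ℕ → ℕ := fun n => ⌊(n : ℝ) * l⌋₊
  have hm := tendsto_floor_natCast_mul_atTop hl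
  have hW := hα _ (continuous_ramp u v) ⟨1, abs_ramp_le_one u v⟩
  have hupper := (hr.comp hm).mul (hW.comp ((tendsto_add_atTop_nat 1).comp hm))
  rw [one_mul] at hupper
  refine tendsto_of_tendsto_of_tendsto_of_le_of_le' (hW.comp hm) hupper ?_ ?_ <;>
    filter_upwards [hm.eventually (eventually_gt_atTop 0), hm.eventually hpos,
      (tendsto_add_atTop_nat 1).comp hm |>.eventually hpos] with n hm0 hSm hSm1
  · have hm0' : (0 : ℝ) < m n := by exact_mod_cast hm0
    simp only [Function.comp_apply, discreteIntegral_eq]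
    refine div_le_div_of_nonneg_right (Finset.sum_le_sum fun i _ => ?_) hSm.le
    refine mul_le_mul_of_nonneg_right (antitone_ramp huv ?_) (hc i)
    exact div_le_div_of_nonneg_left i.cast_nonneg hm0' (Nat.floor_le (by positivity))
  · have hnl : (0 : ℝ) < n * l :=
      lt_of_lt_of_le (by exact_mod_cast hm0) (Nat.floor_le (by positivity))
    simp only [Function.comp_apply, discreteIntegral_eq] at hSm1 ⊢
    rw [div_mul_div_cancel₀' hSm1.ne']
    refine div_le_div_of_nonneg_right ?_ hSm.le
    calc ∑ i ∈ Finset.Icc 1 (m n), ramp u v (i / (n * l)) * c i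
        ≤ ∑ i ∈ Finset.Icc 1 (m n), ramp u v (i / ((m n + 1 : ℕ) : ℝ)) * c i := by
          refine Finset.sum_le_sum fun i _ =>
            mul_le_mul_of_nonneg_right (antitone_ramp huv ?_) (hc i)
          refine div_le_div_of_nonneg_left i.cast_nonneg hnl ?_
          push_cast
          exact (Nat.lt_floor_add_one _).le
      _ ≤ ∑ i ∈ Finset.Icc 1 (m n + 1), ramp u v (i / ((m n + 1 : ℕ) : ℝ)) * c i :=
          Finset.sum_le_sum_of_subset_of_nonneg (Finset.Icc_subset_Icc_right (Nat.le_succ _))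
            fun i _ _ => mul_nonneg (ramp_nonneg ..) (hc i)

lemma tendsto_partialSum_floor_div (hc : ∀ i, 0 ≤ c i)
    (hpos : ∀ᶠ n in atTop, 0 < partialSum c n)
    (hr : Tendsto (fun n => partialSum c (n + 1) / partialSum c n) atTop (𝓝 1))
    (hα : HasWeakLimit c α) {u v l : ℝ} (huv : u < v) (hv : v ≤ 1)
    (hI : 0 < ∫ t, ramp u v t ∂α) (hl : l ∈ Set.Ioc 0 1) :
    Tendsto (fun n : ℕ => partialSum c ⌊n * l⌋₊ / partialSum c n) atTop
      (𝓝 ((∫ t, ramp u v (t / l) ∂α) / ∫ t, ramp u v t ∂α)) := by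
  have hD := tendsto_sum_ramp_div_partialSum_floor hc hpos hr hα huv hl.1
  have hN := hα (fun t => ramp u v (t / l)) ((continuous_ramp u v).comp (continuous_id.div_const l))
    ⟨1, fun t => abs_ramp_le_one ..⟩
  refine (hN.div hD hI.ne').congr' ?_
  filter_upwards [eventually_gt_atTop 0, (tendsto_floor_natCast_mul_atTop hl.1).eventually hpos,
    hD.eventually_const_lt hI] with n hn hSm hDn
  have hnl : (0 : ℝ) < n * l := mul_pos (by exact_mod_cast hn) hl.1
  have htrunc : ∑ i ∈ Finset.Icc 1 n, ramp u v (i / (n * l)) * c i =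
      ∑ i ∈ Finset.Icc 1 ⌊n * l⌋₊, ramp u v (i / (n * l)) * c i := by
    simpa only [mul_one] using sum_Icc_eq_sum_Icc_floor (v := 1) hnl
      (fun t ht => ramp_of_ge huv (hv.trans ht)) (by simpa using floor_natCast_mul_le n hl.2)
  have hA : ∑ i ∈ Finset.Icc 1 ⌊n * l⌋₊, ramp u v (i / (n * l)) * c i ≠ 0 := fun h =>
    hDn.ne' (by rw [h, zero_div])
  simp only [Pi.div_apply, discreteIntegral_eq, div_div, htrunc]
  field_simp

lemma exists_tendsto_stepRatio_rpow [IsFiniteMeasure α] (hc : ∀ i, 0 ≤ c i)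
    (hpos : ∀ᶠ n in atTop, 0 < partialSum c n)
    (hr : Tendsto (fun n => partialSum c (n + 1) / partialSum c n) atTop (𝓝 1))
    (hα : HasWeakLimit c α) {u : ℝ} (hu : u ∈ Set.Ioo 0 1) (hFu : 0 < α.real (Set.Iic u)) :
    ∃ ρ : ℝ, 0 ≤ ρ ∧ ∀ x, 0 < x → Tendsto (stepRatio (partialSum c) x) atTop (𝓝 (x ^ ρ)) := by
  have hS := monotone_partialSum hc
  have hI : 0 < ∫ t, ramp u 1 t ∂α := hFu.trans_le (measureReal_Iic_le_integral_ramp hu.2 α)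
  have hnat (l : ℝ) (hl : l ∈ Set.Ioc 0 1) :=
    tendsto_partialSum_floor_div hc hpos hr hα hu.2 le_rfl hI hl
  have hreal (l : ℝ) (hl : l ∈ Set.Ioc 0 1) :=
    tendsto_stepRatio_of_nat hS hpos hr hl.1 (hnat l hl)
  have hw : (u + 1) / 2 ∈ Set.Ioo u 1 := ⟨by linarith [hu.2], by linarith [hu.2]⟩
  have hw' : (u + 1) / 2 ∈ Set.Ioc 0 1 := ⟨hu.1.trans hw.1, hw.2.le⟩
  have hφw := hFu.trans_le (measureReal_Iic_le_of_tendsto hc hα hw.1 hw.2.le (hnat _ hw'))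
  exact exists_tendsto_stepRatio_rpow_of_pos hS hpos hreal fun x hx =>
    pos_of_tendsto_stepRatio hS hpos ⟨hw'.1, hw.2⟩ hx.1 hφw (hreal _ hw') (hreal x hx)

lemma measureReal_Iic_eq_rpow [IsProbabilityMeasure α] (hc : ∀ i, 0 ≤ c i)
    (hα : HasWeakLimit c α) {ρ : ℝ}
    (hρ : ∀ x, 0 < x → Tendsto (stepRatio (partialSum c) x) atTop (𝓝 (x ^ ρ)))
    {x : ℝ} (hx : x ∈ Set.Ioc 0 1) : α.real (Set.Iic x) = x ^ ρ := by
  have hnat (y : ℝ) (hy : 0 < y) :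
      Tendsto (fun n : ℕ => partialSum c ⌊n * y⌋₊ / partialSum c n) atTop (𝓝 (y ^ ρ)) := by
    simpa [stepRatio, Function.comp_def] using (hρ y hy).comp tendsto_natCast_atTop_atTop
  have hcont : ContinuousAt (fun y : ℝ => y ^ ρ) x :=
    Real.continuousAt_rpow_const x ρ (Or.inl hx.1.ne')
  apply le_antisymm
  · rcases hx.2.lt_or_eq with hx1 | rfl
    · refine ge_of_tendsto (hcont.tendsto.mono_left (nhdsWithin_le_nhds (s := Set.Ioi x))) ?_
      filter_upwards [Ioo_mem_nhdsGT hx1] with v hv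
      exact measureReal_Iic_le_of_tendsto hc hα hv.1 hv.2.le (hnat v (hx.1.trans hv.1))
    · simp
  · refine le_of_tendsto (hcont.tendsto.mono_left (nhdsWithin_le_nhds (s := Set.Iio x))) ?_
    filter_upwards [Ioo_mem_nhdsLT hx.1] with u hu
    exact le_measureReal_Iic_of_tendsto hc hα hu.2 (hu.2.le.trans hx.2) (hnat u hu.1)

lemma tendsto_stepRatio_zero [IsFiniteMeasure α] (hc : ∀ i, 0 ≤ c i)
    (hpos : ∀ᶠ n in atTop, 0 < partialSum c n)
    (hr : Tendsto (fun n => partialSum c (n + 1) / partialSum c n) atTop (𝓝 1))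
    (hα : HasWeakLimit c α) {x v : ℝ} (hx : 0 < x) (hxv : x < v) (hv : v ≤ 1)
    (hFv : α.real (Set.Iic v) = 0) : Tendsto (stepRatio (partialSum c) x) atTop (𝓝 0) := by
  have hI : ∫ t, ramp x v t ∂α = 0 := le_antisymm
    (hFv ▸ integral_ramp_le_measureReal_Iic hxv α) (integral_nonneg (ramp_nonneg x v))
  refine tendsto_stepRatio_of_nat (monotone_partialSum hc) hpos hr hx ?_
  exact tendsto_of_tendsto_of_tendsto_of_le_of_le tendsto_const_nhds
    (hI ▸ hα _ (continuous_ramp x v) ⟨1, abs_ramp_le_one x v⟩)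
    (fun n => div_nonneg (partialSum_nonneg hc _) (partialSum_nonneg hc n))
    (partialSum_floor_div_le_discreteIntegral_ramp hc hxv (hxv.le.trans hv))

end weakLimit

end RegularVariation

open RegularVariation in
theorem limit_cdf_is_power_and_b_regularly_varying_general
    (c : ℕ → ℝ) (hc : ∀ i, 0 ≤ c i)
    (hb : Tendsto (fun n : ℕ => ∑ i ∈ Finset.Icc 1 n, c i) atTop atTop)
    (hratio : Tendsto (fun n : ℕ =>
        (∑ i ∈ Finset.Icc 1 (n + 1), c i) / ∑ i ∈ Finset.Icc 1 n, c i)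
      atTop (𝓝 1))
    (α : Measure ℝ) [IsProbabilityMeasure α]
    (hweak : ∀ h : ℝ → ℝ, Continuous h → (∃ C, ∀ x, |h x| ≤ C) →
      Tendsto (fun n : ℕ => ∑ i ∈ Finset.Icc 1 n,
          h ((i : ℝ) / (n : ℝ)) * (c i / ∑ j ∈ Finset.Icc 1 n, c j))
        atTop (𝓝 (∫ x, h x ∂α))) :
    ∃ ρ : ℝ≥0∞,
      (ρ ≠ ∞ →
        (∀ x : ℝ, x ∈ Set.Ioc (0 : ℝ) 1 → (α (Set.Iic x)).toReal = x ^ ρ.toReal) ∧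
        (∀ x : ℝ, 0 < x →
          Tendsto (fun t : ℝ =>
              (∑ i ∈ Finset.Icc 1 ⌊t * x⌋₊, c i) / ∑ i ∈ Finset.Icc 1 ⌊t⌋₊, c i)
            atTop (𝓝 (x ^ ρ.toReal)))) ∧
      (ρ = ∞ →
        (∀ x : ℝ, x ∈ Set.Ico (0 : ℝ) 1 → (α (Set.Iic x)).toReal = 0) ∧
        (∀ x : ℝ, x ∈ Set.Ioo (0 : ℝ) 1 →
          Tendsto (fun t : ℝ =>
              (∑ i ∈ Finset.Icc 1 ⌊t * x⌋₊, c i) / ∑ i ∈ Finset.Icc 1 ⌊t⌋₊, c i)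
            atTop (𝓝 0)) ∧
        (∀ x : ℝ, 1 < x →
          Tendsto (fun t : ℝ =>
              (∑ i ∈ Finset.Icc 1 ⌊t * x⌋₊, c i) / ∑ i ∈ Finset.Icc 1 ⌊t⌋₊, c i)
            atTop atTop)) := by
  have hα : HasWeakLimit c α := hweak
  have hpos : ∀ᶠ n in atTop, 0 < partialSum c n := hb.eventually_gt_atTop 0
  by_cases hA : ∃ u ∈ Set.Ioo (0 : ℝ) 1, 0 < α.real (Set.Iic u)
  · obtain ⟨u, hu, hFu⟩ := hA
    obtain ⟨ρ, hρ0, hρ⟩ := exists_tendsto_stepRatio_rpow hc hpos hratio hα hu hFu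
    refine ⟨ENNReal.ofReal ρ, fun _ => ?_, fun h => absurd h ENNReal.ofReal_ne_top⟩
    rw [ENNReal.toReal_ofReal hρ0]
    exact ⟨fun x hx => measureReal_Iic_eq_rpow hc hα hρ hx, hρ⟩
  · push Not at hA
    have hF (x : ℝ) (hx : x ∈ Set.Ico (0 : ℝ) 1) : α.real (Set.Iic ((x + 1) / 2)) = 0 :=
      le_antisymm (hA _ ⟨by linarith [hx.1], by linarith [hx.2]⟩) measureReal_nonneg
    have h0 (x : ℝ) (hx : x ∈ Set.Ioo (0 : ℝ) 1) :
        Tendsto (stepRatio (partialSum c) x) atTop (𝓝 0) :=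
      tendsto_stepRatio_zero hc hpos hratio hα hx.1 (by linarith [hx.2]) (by linarith [hx.2])
        (hF x ⟨hx.1.le, hx.2⟩)
    refine ⟨⊤, fun h => absurd rfl h, fun _ => ⟨fun x hx => ?_, h0, fun x hx => ?_⟩⟩
    · exact le_antisymm ((measureReal_mono (Set.Iic_subset_Iic.2 (by linarith [hx.2]))).trans
        (hF x hx).le) measureReal_nonneg
    · have := tendsto_stepRatio_inv_atTop hpos (by positivity)
        (h0 x⁻¹ ⟨inv_pos.2 (by linarith), inv_lt_one_of_one_lt₀ hx⟩)
      rwa [inv_inv] at this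

/-- **Theorem 3, part A.** Let `c 1, c 2, …` be non-negative with
`b n = Σ_{i=1}^n c i → ∞`, suppose the probability measures
`α_n = Σ_{i=1}^n (c i / b n) δ_{i/n}` on `[0,1]` converge weakly to a probability measure
`α` (with distribution function `F x = α (Iic x)`), and suppose `b (n+1) / b n → 1`.
Then there is an index `ρ ∈ [0, ∞]` such that `F x = x ^ ρ` on `[0,1]` (with the stated
conventions for `ρ = 0` and `ρ = ∞`) and the piecewise-constant function
`b(t) = b ⌊t⌋` is regularly varying: `b(tx)/b(t) → x ^ ρ` as `t → ∞` for every `x > 0`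
(interpreting `x ^ ∞ = 0` for `x < 1` and `= ∞` for `x > 1`). -/
theorem limit_cdf_is_power_and_b_regularly_varying
    (c : ℕ → ℝ) (hc : ∀ i, 0 ≤ c i)
    (hb : Tendsto (fun n : ℕ => ∑ i ∈ Finset.Icc 1 n, c i) atTop atTop)
    (hratio : Tendsto (fun n : ℕ =>
        (∑ i ∈ Finset.Icc 1 (n + 1), c i) / ∑ i ∈ Finset.Icc 1 n, c i)
      atTop (𝓝 1))
    (α : Measure ℝ) [IsProbabilityMeasure α] (hα_supp : α (Set.Icc 0 1) = 1)
    (hweak : ∀ h : ℝ → ℝ, Continuous h → (∃ C, ∀ x, |h x| ≤ C) →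
      Tendsto (fun n : ℕ => ∑ i ∈ Finset.Icc 1 n,
          h ((i : ℝ) / (n : ℝ)) * (c i / ∑ j ∈ Finset.Icc 1 n, c j))
        atTop (𝓝 (∫ x, h x ∂α))) :
    ∃ ρ : ℝ≥0∞,
      (ρ ≠ ∞ →
        (∀ x : ℝ, x ∈ Set.Ioc (0 : ℝ) 1 → (α (Set.Iic x)).toReal = x ^ ρ.toReal) ∧
        (∀ x : ℝ, 0 < x →
          Tendsto (fun t : ℝ =>
              (∑ i ∈ Finset.Icc 1 ⌊t * x⌋₊, c i) / ∑ i ∈ Finset.Icc 1 ⌊t⌋₊, c i)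
            atTop (𝓝 (x ^ ρ.toReal)))) ∧
      (ρ = ∞ →
        (∀ x : ℝ, x ∈ Set.Ico (0 : ℝ) 1 → (α (Set.Iic x)).toReal = 0) ∧
        (∀ x : ℝ, x ∈ Set.Ioo (0 : ℝ) 1 →
          Tendsto (fun t : ℝ =>
              (∑ i ∈ Finset.Icc 1 ⌊t * x⌋₊, c i) / ∑ i ∈ Finset.Icc 1 ⌊t⌋₊, c i)
            atTop (𝓝 0)) ∧
        (∀ x : ℝ, 1 < x →
          Tendsto (fun t : ℝ =>
              (∑ i ∈ Finset.Icc 1 ⌊t * x⌋₊, c i) / ∑ i ∈ Finset.Icc 1 ⌊t⌋₊, c i)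
            atTop atTop)) :=
  limit_cdf_is_power_and_b_regularly_varying_general c hc hb hratio α hweak
end

section
/- Let (b_n) be a sequence of positive numbers with b_{n+1}/b_n → 1 as n → ∞, let b(t) be the piecewise-constant function with b(t) = b_n for t ∈ [n, n+1) (and b(t) = b_0 for t ∈ [0,1) with some b_0 > 0), and let x > 0 and L ≥ 0 be such that b(nx)/b(n) → L as n → ∞ through the integers. Then b(tx)/b(t) → L as t → ∞ through all real values. -/
open Filter Topology

/-- Let `(b_n)` be positive with `b_{n+1} / b_n → 1`, and let
`B t = b ⌊t⌋` be the piecewise-constant interpolating function.  If for some `x > 0` and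
`L ≥ 0` one has `B (n*x) / B n → L` along the integers, then `B (t*x) / B t → L` along
all real `t → ∞`. -/
theorem step_function_ratio_limit_upgrade
    (b : ℕ → ℝ) (hb_pos : ∀ n, 0 < b n)
    (hb_ratio : Tendsto (fun n : ℕ => b (n + 1) / b n) atTop (𝓝 1))
    (x : ℝ) (hx : 0 < x) (L : ℝ) (hL : 0 ≤ L)
    (hint : Tendsto (fun n : ℕ => b ⌊(n : ℝ) * x⌋₊ / b ⌊(n : ℝ)⌋₊) atTop (𝓝 L)) :
    Tendsto (fun t : ℝ => b ⌊t * x⌋₊ / b ⌊t⌋₊) atTop (𝓝 L) := by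
  -- shift lemma: for each fixed m, b (k+m) / b k → 1
  have hA : ∀ m : ℕ, Tendsto (fun k => b (k + m) / b k) atTop (𝓝 1) := by
    intro m
    induction m with
    | zero =>
      have : (fun k => b (k + 0) / b k) = fun _ => (1 : ℝ) := by
        funext k; simp [div_self (hb_pos k).ne']
      rw [this]; exact tendsto_const_nhds
    | succ m ih =>
      have h1 : Tendsto (fun k => b (k + m + 1) / b (k + m)) atTop (𝓝 1) :=
        hb_ratio.comp (tendsto_add_atTop_nat m)
      have h2 := h1.mul ih
      rw [mul_one] at h2
      refine h2.congr fun k => ?_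
      rw [div_mul_div_cancel₀ (hb_pos (k + m)).ne']
      ring_nf
  set M : ℕ := ⌈x⌉₊ with hM
  -- the first factor tends to 1
  have hF : Tendsto (fun t : ℝ => b ⌊t * x⌋₊ / b ⌊(⌊t⌋₊ : ℝ) * x⌋₊) atTop (𝓝 1) := by
    rw [Metric.tendsto_atTop]
    intro ε hε
    have hev : ∀ᶠ k : ℕ in atTop, ∀ m ∈ Finset.range (M + 1),
        |b (k + m) / b k - 1| < ε := by
      rw [eventually_all_finset]
      intro m _
      have := (hA m).eventually (Metric.ball_mem_nhds (1 : ℝ) hε)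
      filter_upwards [this] with k hk
      simpa [Real.dist_eq] using hk
    obtain ⟨N, -, hN⟩ := atTop_basis.eventually_iff.mp hev
    refine ⟨(N : ℝ) / x + 1, fun t ht => ?_⟩
    have ht0 : (0 : ℝ) ≤ t := le_trans (by positivity) ht
    have hfloor_gt : (N : ℝ) / x < (⌊t⌋₊ : ℝ) := by
      have h1 : t - 1 < (⌊t⌋₊ : ℝ) := by
        have := Nat.lt_floor_add_one t
        linarith [Nat.sub_one_lt_floor t]
      linarith
    have hk_ge : N ≤ ⌊(⌊t⌋₊ : ℝ) * x⌋₊ := by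
      rw [Nat.le_floor_iff (by positivity)]
      calc (N : ℝ) = (N / x) * x := by field_simp
        _ ≤ (⌊t⌋₊ : ℝ) * x := by
            apply mul_le_mul_of_nonneg_right hfloor_gt.le hx.le
    set k : ℕ := ⌊(⌊t⌋₊ : ℝ) * x⌋₊ with hk
    -- k ≤ ⌊t*x⌋₊ ≤ k + M
    have hle : k ≤ ⌊t * x⌋₊ :=
      Nat.floor_le_floor (mul_le_mul_of_nonneg_right (Nat.floor_le ht0) hx.le)
    have hub : ⌊t * x⌋₊ ≤ k + M := by
      have htx : t * x < ((k + M + 1 : ℕ) : ℝ) := by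
        have h1 : t < (⌊t⌋₊ : ℝ) + 1 := Nat.lt_floor_add_one t
        have h2 : t * x < ((⌊t⌋₊ : ℝ) + 1) * x := by
          apply mul_lt_mul_of_pos_right h1 hx
        have h3 : (⌊t⌋₊ : ℝ) * x ≤ (k : ℝ) + 1 := by
          have := Nat.lt_floor_add_one ((⌊t⌋₊ : ℝ) * x)
          push_cast at this ⊢
          linarith
        have h4 : x ≤ (M : ℝ) := Nat.le_ceil x
        push_cast
        nlinarith
      have := Nat.floor_lt (by positivity : (0:ℝ) ≤ t * x) |>.mpr htx
      omega
    set m : ℕ := ⌊t * x⌋₊ - k with hm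
    have hmk : ⌊t * x⌋₊ = k + m := by omega
    have hmM : m ∈ Finset.range (M + 1) := by
      simp only [Finset.mem_range]; omega
    have := hN hk_ge m hmM
    rw [Real.dist_eq, hmk]
    exact this
  -- the second factor tends to L
  have hG : Tendsto (fun t : ℝ => b ⌊(⌊t⌋₊ : ℝ) * x⌋₊ / b ⌊t⌋₊) atTop (𝓝 L) := by
    have hcomp := hint.comp (tendsto_nat_floor_atTop (α := ℝ))
    refine hcomp.congr fun t => ?_
    simp [Function.comp, Nat.floor_natCast]
  have hmul := hF.mul hG
  rw [one_mul] at hmul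
  refine hmul.congr fun t => ?_
  rw [div_mul_div_cancel₀ (hb_pos ⌊(⌊t⌋₊ : ℝ) * x⌋₊).ne']
end

section
/- Set c_i = 1/i. Then for every x ∈ (0, 1], with k_n = ⌊nx⌋, the ratio (Σ_{i=1}^{k_n} 1/i) / (Σ_{i=1}^{n} 1/i) → 1 as n → ∞. Consequently the measures α_n = Σ_{i=1}^n ((1/i) / Σ_{j=1}^n (1/j)) δ_{i/n} on [0,1] converge weakly to the Dirac measure concentrated at the point 0. -/
/-!
From `log (n + 1) ≤ H n ≤ 1 + log n` one gets `H n - H ⌊n x⌋ ≤ 1 - log x`: the harmonic mass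
carried by the indices `i > n x` stays bounded while the total mass `H n` tends to infinity. So
for every `δ > 0` the weight that `α_n` puts beyond `δ` tends to `0`, and averages of a bounded
function continuous at `0` against weights concentrating at `0` tend to its value at `0`.
-/

open Filter Topology

open Finset in
theorem abs_sum_mul_sub_le_add_mul_sum_filter {ι : Type*} {s : Finset ι} {w f : ι → ℝ}
    {c ε M : ℝ} (P : ι → Prop) [DecidablePred P] (hw : ∀ i ∈ s, 0 ≤ w i)
    (hs : ∑ i ∈ s, w i = 1) (hε : 0 ≤ ε) (hnear : ∀ i ∈ s, ¬P i → |f i - c| ≤ ε)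
    (hfar : ∀ i ∈ s, |f i - c| ≤ M) :
    |∑ i ∈ s, f i * w i - c| ≤ ε + M * ∑ i ∈ s with P i, w i := by
  have hcentre : ∑ i ∈ s, f i * w i - c = ∑ i ∈ s, (f i - c) * w i := by
    simp only [sub_mul, sum_sub_distrib, ← mul_sum, hs, mul_one]
  have hnear_mass : ∑ i ∈ s with ¬P i, w i ≤ 1 :=
    hs ▸ sum_le_sum_of_subset_of_nonneg (filter_subset _ _) fun i hi _ => hw i hi
  calc |∑ i ∈ s, f i * w i - c|
      ≤ ∑ i ∈ s, |f i - c| * w i := by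
        rw [hcentre]
        refine (abs_sum_le_sum_abs _ _).trans_eq (sum_congr rfl fun i hi => ?_)
        rw [abs_mul, abs_of_nonneg (hw i hi)]
    _ = ∑ i ∈ s with ¬P i, |f i - c| * w i + ∑ i ∈ s with P i, |f i - c| * w i :=
        (sum_filter_not_add_sum_filter _ _ _).symm
    _ ≤ ε * ∑ i ∈ s with ¬P i, w i + M * ∑ i ∈ s with P i, w i := by
        rw [mul_sum, mul_sum]
        gcongr with i hi i hi
        · exact hw i (mem_filter.mp hi).1
        · exact hnear i (mem_filter.mp hi).1 (mem_filter.mp hi).2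
        · exact hw i (mem_filter.mp hi).1
        · exact hfar i (mem_filter.mp hi).1
    _ ≤ ε + M * ∑ i ∈ s with P i, w i := by gcongr; nlinarith

theorem tendsto_sum_mul_of_mass_concentrates {β ι X : Type*} [PseudoMetricSpace X]
    {l : Filter β} {s : β → Finset ι} {w : β → ι → ℝ} {p : β → ι → X} {a : X}
    (hw : ∀ b, ∀ i ∈ s b, 0 ≤ w b i) (hs : ∀ᶠ b in l, ∑ i ∈ s b, w b i = 1)
    (hconc : ∀ᶠ δ in 𝓝[>] 0,
      Tendsto (fun b => ∑ i ∈ s b with δ < dist (p b i) a, w b i) l (𝓝 0))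
    {h : X → ℝ} (hh : ContinuousAt h a) (hb : ∃ C, ∀ x, |h x| ≤ C) :
    Tendsto (fun b => ∑ i ∈ s b, h (p b i) * w b i) l (𝓝 (h a)) := by
  obtain ⟨C, hC⟩ := hb
  rw [Metric.tendsto_nhds]
  intro ε hε
  obtain ⟨δ₀, hδ₀, hcont⟩ := Metric.continuousAt_iff.mp hh (ε / 2) (half_pos hε)
  obtain ⟨δ, hfar_mass, -, hδδ₀⟩ := (hconc.and (Ioo_mem_nhdsGT hδ₀)).exists
  have hfar_small :
      Tendsto (fun b => 2 * C * ∑ i ∈ s b with δ < dist (p b i) a, w b i) l (𝓝 0) := by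
    simpa using hfar_mass.const_mul (2 * C)
  filter_upwards [hs, hfar_small.eventually (gt_mem_nhds (half_pos hε))] with b hsb hfar
  rw [Real.dist_eq]
  calc _ ≤ ε / 2 + 2 * C * ∑ i ∈ s b with δ < dist (p b i) a, w b i := by
        refine abs_sum_mul_sub_le_add_mul_sum_filter _ (hw b) hsb (half_pos hε).le
          (fun i _ hi => ?_) (fun i _ => ?_)
        · exact (hcont ((not_lt.mp hi).trans_lt hδδ₀)).le
        · linarith [abs_sub (h (p b i)) (h a), hC (p b i), hC a]
    _ < ε := by linarith

theorem harmonic_real_eq_sum_Icc (n : ℕ) :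
    (harmonic n : ℝ) = ∑ i ∈ Finset.Icc 1 n, (1 : ℝ) / i := by
  simp [harmonic_eq_sum_Icc]

theorem harmonic_real_nonneg (n : ℕ) : 0 ≤ (harmonic n : ℝ) := by
  rw [harmonic_real_eq_sum_Icc]
  positivity

theorem harmonic_sub_harmonic_eq_sum_Ioc {k n : ℕ} (hkn : k ≤ n) :
    (harmonic n : ℝ) - harmonic k = ∑ i ∈ Finset.Ioc k n, (1 : ℝ) / i := by
  have hIcc (m : ℕ) : Finset.Icc 1 m = Finset.Ioc 0 m := Finset.Icc_add_one_left_eq_Ioc 0 m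
  rw [harmonic_real_eq_sum_Icc, harmonic_real_eq_sum_Icc, hIcc, hIcc, sub_eq_iff_eq_add',
    Finset.sum_Ioc_consecutive _ (Nat.zero_le k) hkn]

theorem tendsto_harmonic_atTop : Tendsto (fun n : ℕ => (harmonic n : ℝ)) atTop atTop :=
  (Real.tendsto_harmonic_sub_log.add_atTop
    (Real.tendsto_log_atTop.comp tendsto_natCast_atTop_atTop)).congr fun n => by simp

theorem floor_natCast_mul_le {x : ℝ} (hx : x ≤ 1) (n : ℕ) : ⌊n * x⌋₊ ≤ n :=
  Nat.floor_le_of_le (mul_le_of_le_one_right n.cast_nonneg hx)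

theorem harmonic_sub_harmonic_floor_mul_le {x : ℝ} (hx : 0 < x) {n : ℕ} (hn : n ≠ 0) :
    (harmonic n : ℝ) - harmonic ⌊n * x⌋₊ ≤ 1 - Real.log x := by
  have hfloor : Real.log n + Real.log x ≤ harmonic ⌊n * x⌋₊ := by
    rw [← Real.log_mul (by positivity) hx.ne']
    refine (Real.log_le_log (by positivity) ?_).trans (log_add_one_le_harmonic _)
    exact_mod_cast (Nat.lt_floor_add_one _).le
  linarith [harmonic_le_one_add_log n]

theorem tendsto_harmonic_sub_harmonic_floor_mul_div {x : ℝ} (hx0 : 0 < x) (hx1 : x ≤ 1) :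
    Tendsto (fun n : ℕ => ((harmonic n : ℝ) - harmonic ⌊n * x⌋₊) / harmonic n)
      atTop (𝓝 0) := by
  refine tendsto_of_tendsto_of_tendsto_of_le_of_le' tendsto_const_nhds
    ((tendsto_const_nhds (x := 1 - Real.log x)).div_atTop tendsto_harmonic_atTop) ?_ ?_
  · refine Eventually.of_forall fun n => div_nonneg ?_ (harmonic_real_nonneg n)
    rw [harmonic_sub_harmonic_eq_sum_Ioc (floor_natCast_mul_le hx1 n)]
    positivity
  · filter_upwards [eventually_ne_atTop 0] with n hn
    exact div_le_div_of_nonneg_right (harmonic_sub_harmonic_floor_mul_le hx0 hn)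
      (harmonic_real_nonneg n)

theorem tendsto_harmonic_floor_mul_div_harmonic {x : ℝ} (hx0 : 0 < x) (hx1 : x ≤ 1) :
    Tendsto (fun n : ℕ => (harmonic ⌊n * x⌋₊ : ℝ) / harmonic n) atTop (𝓝 1) := by
  have h := (tendsto_const_nhds (x := (1 : ℝ))).sub
    (tendsto_harmonic_sub_harmonic_floor_mul_div hx0 hx1)
  rw [sub_zero] at h
  refine h.congr' ?_
  filter_upwards [eventually_ne_atTop 0] with n hn
  rw [sub_div, div_self (by exact_mod_cast (harmonic_pos hn).ne'), sub_sub_cancel]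

theorem sum_filter_lt_div_harmonic_le {δ : ℝ} (hδ0 : 0 < δ) (hδ1 : δ ≤ 1) (n : ℕ) :
    ∑ i ∈ Finset.Icc 1 n with δ < dist (((i : ℕ) : ℝ) / n) 0, (1 : ℝ) / i / harmonic n ≤
      ((harmonic n : ℝ) - harmonic ⌊n * δ⌋₊) / harmonic n := by
  rw [← Finset.sum_div, harmonic_sub_harmonic_eq_sum_Ioc (floor_natCast_mul_le hδ1 n)]
  refine div_le_div_of_nonneg_right (Finset.sum_le_sum_of_subset_of_nonneg ?_
    fun _ _ _ => by positivity) (harmonic_real_nonneg n)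
  intro i hi
  obtain ⟨hi, hfar⟩ := Finset.mem_filter.mp hi
  obtain ⟨hi1, hin⟩ := Finset.mem_Icc.mp hi
  have hn : (0 : ℝ) < n := by exact_mod_cast hi1.trans hin
  rw [Real.dist_0_eq_abs, abs_of_nonneg (by positivity), lt_div_iff₀ hn] at hfar
  exact Finset.mem_Ioc.mpr ⟨(Nat.floor_lt (by positivity)).mpr (by linarith), hin⟩

/-- Set `c i = 1 / i`.  For every `x ∈ (0, 1]`, with `k_n = ⌊n*x⌋`,
`(Σ_{i=1}^{k_n} 1/i) / (Σ_{i=1}^n 1/i) → 1`.  Consequently, the measures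
`α_n = Σ_{i=1}^n ((1/i) / Σ_{j=1}^n (1/j)) δ_{i/n}` converge weakly to the Dirac measure
concentrated at the point `0`. -/
theorem harmonic_coefficients_concentrate_at_zero :
    (∀ x : ℝ, x ∈ Set.Ioc (0 : ℝ) 1 →
      Tendsto (fun n : ℕ =>
          (∑ i ∈ Finset.Icc 1 ⌊(n : ℝ) * x⌋₊, (1 : ℝ) / i)
            / ∑ i ∈ Finset.Icc 1 n, (1 : ℝ) / i)
        atTop (𝓝 1)) ∧
    (∀ h : ℝ → ℝ, Continuous h → (∃ C, ∀ x, |h x| ≤ C) →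
      Tendsto (fun n : ℕ => ∑ i ∈ Finset.Icc 1 n,
          h ((i : ℝ) / (n : ℝ)) * (((1 : ℝ) / i) / ∑ j ∈ Finset.Icc 1 n, (1 : ℝ) / j))
        atTop (𝓝 (h 0))) := by
  simp only [← harmonic_real_eq_sum_Icc]
  refine ⟨fun x ⟨hx0, hx1⟩ => tendsto_harmonic_floor_mul_div_harmonic hx0 hx1,
    fun h hc hb => tendsto_sum_mul_of_mass_concentrates
      (fun n i _ => div_nonneg (by positivity) (harmonic_real_nonneg n)) ?_ ?_
      hc.continuousAt hb⟩
  · filter_upwards [eventually_ne_atTop 0] with n hn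
    rw [← Finset.sum_div, ← harmonic_real_eq_sum_Icc,
      div_self (by exact_mod_cast (harmonic_pos hn).ne')]
  · filter_upwards [Ioc_mem_nhdsGT one_pos] with δ ⟨hδ0, hδ1⟩
    exact squeeze_zero
      (fun n => Finset.sum_nonneg fun i _ => div_nonneg (by positivity) (harmonic_real_nonneg n))
      (sum_filter_lt_div_harmonic_le hδ0 hδ1) (tendsto_harmonic_sub_harmonic_floor_mul_div hδ0 hδ1)
end

section
/- Fix c > 0 and let b_n = e^{c√n}. Then: (i) b_{n+1}/b_n → 1 as n → ∞; and (ii) for every x with 0 < x < 1, b_{⌊nx⌋}/b_n → 0 as n → ∞. Consequently the measures α_n = Σ_{i=1}^n ((b_i - b_{i-1})/b_n) δ_{i/n} (with b_0 = 0) converge weakly to the Dirac measure concentrated at 1, even though condition b_{n+1}/b_n → 1 holds; the limit corresponds to ρ = ∞ in Theorem 3. -/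
open Filter Topology Real Finset

/-!
Since `√(n+1) - √n → 0`, consecutive ratios of `b n = exp (c √n)` tend to `1`; but
`b ⌊n x⌋ / b n ≤ exp (c (√x - 1) √n) → 0` for `x < 1`. So the mass `b ⌊n x⌋ / b n` that `α_n`
puts on `[0, x]` vanishes, while the remaining mass sits in `(x, 1]`, where a test function
continuous at `1` is close to its value at `1`.
-/

theorem sum_Ioc_sub_pred {M : Type*} [AddCommGroup M] (f : ℕ → M) {m n : ℕ} (hmn : m ≤ n) :
    ∑ i ∈ Ioc m n, (f i - f (i - 1)) = f n - f m := by
  induction n, hmn using Nat.le_induction with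
  | base => simp
  | succ n hmn ih => rw [sum_Ioc_succ_top hmn, ih, Nat.add_sub_cancel]; abel

theorem abs_sum_mul_le_mul_sum {ι : Type*} {s : Finset ι} {g w : ι → ℝ} {B : ℝ}
    (hw : ∀ i ∈ s, 0 ≤ w i) (hg : ∀ i ∈ s, |g i| ≤ B) :
    |∑ i ∈ s, g i * w i| ≤ B * ∑ i ∈ s, w i :=
  calc |∑ i ∈ s, g i * w i| ≤ ∑ i ∈ s, |g i * w i| := abs_sum_le_sum_abs _ _
    _ ≤ ∑ i ∈ s, B * w i := sum_le_sum fun i hi => by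
      rw [abs_mul, abs_of_nonneg (hw i hi)]
      exact mul_le_mul_of_nonneg_right (hg i hi) (hw i hi)
    _ = B * ∑ i ∈ s, w i := (mul_sum _ _ _).symm

/-- `∫ h dα_n` for the discrete measure `α_n = ∑_{i=1}^n ((b i - b (i-1)) / b n) δ_{i/n}`. -/
noncomputable def incrementIntegral (b : ℕ → ℝ) (h : ℝ → ℝ) (n : ℕ) : ℝ :=
  ∑ i ∈ Icc 1 n, h (i / n) * ((b i - b (i - 1)) / b n)

section incrementIntegral

variable {b : ℕ → ℝ} {h : ℝ → ℝ}

theorem abs_incrementIntegral_sub_le (hb : Monotone b) (hb0 : b 0 = 0) {m n : ℕ} (hbn : 0 < b n)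
    (hmn : m ≤ n) {A η : ℝ} (hA : ∀ i ∈ Ioc 0 m, |h (i / n) - h 1| ≤ A)
    (hη : ∀ i ∈ Ioc m n, |h (i / n) - h 1| ≤ η) (hη0 : 0 ≤ η) :
    |incrementIntegral b h n - h 1| ≤ A * (b m / b n) + η := by
  set w : ℕ → ℝ := fun i => (b i - b (i - 1)) / b n
  have hw : ∀ i, 0 ≤ w i := fun i => div_nonneg (sub_nonneg.2 (hb (Nat.sub_le i 1))) hbn.le
  have hmass : ∀ {k l}, k ≤ l → ∑ i ∈ Ioc k l, w i = (b l - b k) / b n := fun hkl => by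
    rw [← sum_div, sum_Ioc_sub_pred b hkl]
  have hbm : 0 ≤ b m := hb0 ▸ hb m.zero_le
  have hcentered : incrementIntegral b h n - h 1 = ∑ i ∈ Ioc 0 n, (h (i / n) - h 1) * w i := by
    have hIcc : Icc 1 n = Ioc 0 n := Icc_add_one_left_eq_Ioc 0 n
    rw [incrementIntegral, hIcc]
    simp only [sub_mul, sum_sub_distrib, ← mul_sum, hmass n.zero_le, hb0, sub_zero,
      div_self hbn.ne', mul_one, w]
  calc |incrementIntegral b h n - h 1|
      = |∑ i ∈ Ioc 0 m, (h (i / n) - h 1) * w i + ∑ i ∈ Ioc m n, (h (i / n) - h 1) * w i| := by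
        rw [hcentered, sum_Ioc_consecutive _ m.zero_le hmn]
    _ ≤ A * ∑ i ∈ Ioc 0 m, w i + η * ∑ i ∈ Ioc m n, w i :=
        (abs_add_le _ _).trans <| add_le_add
          (abs_sum_mul_le_mul_sum (fun i _ => hw i) hA)
          (abs_sum_mul_le_mul_sum (fun i _ => hw i) hη)
    _ = A * (b m / b n) + η * ((b n - b m) / b n) := by
        rw [hmass m.zero_le, hmass hmn, hb0, sub_zero]
    _ ≤ A * (b m / b n) + η := by
        gcongr
        exact mul_le_of_le_one_right hη0 (div_le_one_of_le₀ (by linarith) hbn.le)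

theorem tendsto_incrementIntegral_of_tendsto_floor_ratio (hb : Monotone b) (hb0 : b 0 = 0)
    (hpos : ∀ᶠ n in atTop, 0 < b n)
    (hratio : ∀ x ∈ Set.Ioo (0 : ℝ) 1, Tendsto (fun n : ℕ => b ⌊(n : ℝ) * x⌋₊ / b n) atTop (𝓝 0))
    (hh : ContinuousOn h (Set.Icc 0 1)) :
    Tendsto (incrementIntegral b h) atTop (𝓝 (h 1)) := by
  obtain ⟨C, hC⟩ := isCompact_Icc.exists_bound_of_continuousOn hh
  simp only [Real.norm_eq_abs] at hC
  have hone : (1 : ℝ) ∈ Set.Icc 0 1 := ⟨zero_le_one, le_rfl⟩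
  have hunit : ∀ {i n : ℕ}, i ≤ n → (i / n : ℝ) ∈ Set.Icc 0 1 := fun hin =>
    ⟨by positivity, div_le_one_of_le₀ (by exact_mod_cast hin) (Nat.cast_nonneg _)⟩
  rw [Metric.tendsto_nhds]
  intro ε hε
  obtain ⟨δ, hδ, hclose⟩ := Metric.continuousWithinAt_iff.1 (hh 1 hone) (ε / 2)
    (half_pos hε)
  set x : ℝ := max (1 / 2) (1 - δ / 2)
  have hx : x ∈ Set.Ioo 0 1 := ⟨by positivity, max_lt (by norm_num) (by linarith)⟩
  have hsmall : ∀ᶠ n : ℕ in atTop, 2 * C * (b ⌊(n : ℝ) * x⌋₊ / b n) < ε / 2 := by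
    have hlim := (hratio x hx).const_mul (2 * C)
    rw [mul_zero] at hlim
    exact hlim.eventually (gt_mem_nhds (half_pos hε))
  filter_upwards [hpos, hsmall] with n hbn hn
  have hmn : ⌊(n : ℝ) * x⌋₊ ≤ n :=
    Nat.floor_le_of_le (mul_le_of_le_one_right (Nat.cast_nonneg n) hx.2.le)
  rw [Real.dist_eq]
  refine (abs_incrementIntegral_sub_le hb hb0 hbn hmn (A := 2 * C) (fun i hi => ?_)
    (fun i hi => ?_) (half_pos hε).le).trans_lt (by linarith)
  · have hi := hunit ((mem_Ioc.1 hi).2.trans hmn)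
    calc |h (i / n) - h 1| ≤ |h (i / n)| + |h 1| := abs_sub _ _
      _ ≤ 2 * C := by linarith [hC _ hi, hC _ hone]
  · obtain ⟨hmi, hin⟩ := mem_Ioc.1 hi
    have hnpos : (0 : ℝ) < n := by exact_mod_cast (hmi.trans_le hin).pos
    have hxi : x < i / n := (lt_div_iff₀ hnpos).2 (by linarith [Nat.lt_of_floor_lt hmi])
    refine (hclose (hunit hin) ?_).le
    rw [Real.dist_eq, abs_of_nonpos (by linarith [(hunit hin).2])]
    linarith [le_max_right (1 / 2 : ℝ) (1 - δ / 2)]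

end incrementIntegral

theorem tendsto_sqrt_add_one_sub_sqrt :
    Tendsto (fun x : ℝ => √(x + 1) - √x) atTop (𝓝 0) := by
  have hsum : Tendsto (fun x : ℝ => √(x + 1) + √x) atTop atTop :=
    (tendsto_sqrt_atTop.comp (tendsto_atTop_add_const_right _ 1 tendsto_id)).atTop_add_atTop
      tendsto_sqrt_atTop
  refine (tendsto_inv_atTop_zero.comp hsum).congr' ?_
  filter_upwards [eventually_ge_atTop 0] with x hx
  refine (eq_inv_of_mul_eq_one_left ?_).symm
  nlinarith [sq_sqrt hx, sq_sqrt (by linarith : 0 ≤ x + 1)]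

noncomputable def expSqrtSeq (c : ℝ) (n : ℕ) : ℝ :=
  if n = 0 then 0 else exp (c * √n)

namespace expSqrtSeq

variable {c : ℝ} {n : ℕ}

theorem zero : expSqrtSeq c 0 = 0 := if_pos rfl

theorem of_ne_zero (hn : n ≠ 0) : expSqrtSeq c n = exp (c * √n) := if_neg hn

theorem pos (hn : n ≠ 0) : 0 < expSqrtSeq c n := of_ne_zero hn ▸ exp_pos _

theorem nonneg : 0 ≤ expSqrtSeq c n := by
  rcases eq_or_ne n 0 with rfl | hn
  exacts [zero.ge, (pos hn).le]

theorem monotone (hc : 0 ≤ c) : Monotone (expSqrtSeq c) := by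
  intro m n hmn
  rcases eq_or_ne m 0 with rfl | hm
  · exact zero ▸ nonneg
  rw [of_ne_zero hm, of_ne_zero (by omega)]
  gcongr

theorem tendsto_succ_div (c : ℝ) :
    Tendsto (fun n : ℕ => expSqrtSeq c (n + 1) / expSqrtSeq c n) atTop (𝓝 1) := by
  have hlim := ((tendsto_sqrt_add_one_sub_sqrt.comp tendsto_natCast_atTop_atTop).const_mul c)
  rw [mul_zero] at hlim
  refine (exp_zero ▸ (continuous_exp.tendsto 0).comp hlim).congr' ?_
  filter_upwards [eventually_ne_atTop 0] with n hn
  rw [of_ne_zero hn, of_ne_zero n.succ_ne_zero, ← exp_sub, Function.comp_apply,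
    Function.comp_apply, Nat.cast_succ, mul_sub]

theorem tendsto_floor_mul_div (hc : 0 < c) {x : ℝ} (hx : x < 1) :
    Tendsto (fun n : ℕ => expSqrtSeq c ⌊(n : ℝ) * x⌋₊ / expSqrtSeq c n) atTop (𝓝 0) := by
  have hsqrt : √x < 1 := (sqrt_lt' one_pos).2 (by linarith)
  have hdecay : Tendsto (fun n : ℕ => exp (c * (√x - 1) * √n)) atTop (𝓝 0) :=
    tendsto_exp_atBot.comp <| Tendsto.const_mul_atTop_of_neg (by nlinarith) <|
      tendsto_sqrt_atTop.comp tendsto_natCast_atTop_atTop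
  refine squeeze_zero' (.of_forall fun n => div_nonneg nonneg nonneg) ?_ hdecay
  filter_upwards [eventually_ne_atTop 0] with n hn
  have hfloor : expSqrtSeq c ⌊(n : ℝ) * x⌋₊ ≤ exp (c * √((n : ℝ) * x)) := by
    rcases eq_or_ne ⌊(n : ℝ) * x⌋₊ 0 with h0 | h0
    · exact h0 ▸ zero.trans_le (exp_pos _).le
    rw [of_ne_zero h0]
    gcongr
    exact Nat.floor_le (Nat.pos_of_floor_pos (Nat.pos_of_ne_zero h0)).le
  calc expSqrtSeq c ⌊(n : ℝ) * x⌋₊ / expSqrtSeq c n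
      ≤ exp (c * √((n : ℝ) * x)) / exp (c * √n) := by rw [of_ne_zero hn]; gcongr
    _ = exp (c * (√x - 1) * √n) := by
        rw [← exp_sub, sqrt_mul (Nat.cast_nonneg n)]; ring_nf

end expSqrtSeq

/-- Fix `c > 0` and let `b n = exp (c * √n)` (with the convention
`b 0 = 0`).  Then (i) `b (n+1) / b n → 1`; (ii) for every `0 < x < 1`,
`b ⌊n*x⌋ / b n → 0`; and consequently the measures
`α_n = Σ_{i=1}^n ((b i - b (i-1)) / b n) δ_{i/n}` converge weakly to the Dirac measure
concentrated at `1`, even though `b (n+1) / b n → 1` holds (the case `ρ = ∞`). -/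
theorem exp_sqrt_coefficients_concentrate_at_one
    (c : ℝ) (hc : 0 < c)
    (b : ℕ → ℝ)
    (hb : ∀ n : ℕ, b n = if n = 0 then 0 else Real.exp (c * Real.sqrt n)) :
    Tendsto (fun n : ℕ => b (n + 1) / b n) atTop (𝓝 1) ∧
    (∀ x : ℝ, x ∈ Set.Ioo (0 : ℝ) 1 →
      Tendsto (fun n : ℕ => b ⌊(n : ℝ) * x⌋₊ / b n) atTop (𝓝 0)) ∧
    (∀ h : ℝ → ℝ, Continuous h → (∃ C, ∀ x, |h x| ≤ C) →
      Tendsto (fun n : ℕ => ∑ i ∈ Finset.Icc 1 n,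
          h ((i : ℝ) / (n : ℝ)) * ((b i - b (i - 1)) / b n))
        atTop (𝓝 (h 1))) := by
  obtain rfl : b = expSqrtSeq c := funext hb
  have hratio (x : ℝ) (hx : x ∈ Set.Ioo (0 : ℝ) 1) := expSqrtSeq.tendsto_floor_mul_div hc hx.2
  refine ⟨expSqrtSeq.tendsto_succ_div c, hratio, fun h hh _ => ?_⟩
  exact tendsto_incrementIntegral_of_tendsto_floor_ratio (expSqrtSeq.monotone hc.le)
    expSqrtSeq.zero ((eventually_ne_atTop 0).mono fun _ => expSqrtSeq.pos) hratio hh.continuousOn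
end
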